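/- arXiv:2304.12075 — 9 statements merged into one kernel-verified Lean document; each statement's English description precedes it below -/
import Mathlib

section
/- Let M be a diagonalizable n×n matrix over a field K whose characteristic polynomial has n distinct roots in its splitting field L, and suppose the Galois group Gal(L/K), viewed as a permutation group on the roots, is m-homogeneous (for every pair of m-element subsets S, S' of the roots there is a group element mapping S onto S'). Then every m×m minor of the eigenvector matrix U of M is nonzero. -/
/-!
The rows `W` of the invertible matrix `U` are linearly independent, so some minor
`det U_{W,S₀}` is nonzero. Choose `σ ∈ Gal(L/K)` mapping the eigenvalues indexed by `S₀` onto
those indexed by `S`. Since `M` has entries in `K` and its eigenvalues are simple, `σ` sends each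
eigenvector `u_j` (`j ∈ S₀`) to a multiple of some `u_{j'}` (`j' ∈ S`). Hence the nonzero
`σ (det U_{W,S₀})` is a multiple of `± det U_{W,S}`.
-/

open Function Matrix Submodule Finset

theorem exists_linearIndependent_comp_of_span_eq_top {K V ι : Type*} [Field K] [AddCommGroup V]
    [Module K V] [FiniteDimensional K V] {v : ι → V} (hv : span K (Set.range v) = ⊤) {k : ℕ}
    (hk : Module.finrank K V = k) :
    ∃ s : Fin k → ι, LinearIndependent K (v ∘ s) := by
  obtain ⟨κ, a, -, hspan, hli⟩ := exists_linearIndependent' K v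
  have : Finite κ := hli.finite
  have := Fintype.ofFinite κ
  have hcard : Fintype.card κ = k := by
    rw [linearIndependent_iff_card_eq_finrank_span.mp hli, Set.finrank, hspan, hv, finrank_top, hk]
  let e := Fintype.equivFinOfCardEq hcard
  exact ⟨a ∘ e.symm, hli.comp e.symm e.symm.injective⟩

namespace Matrix

theorem map_algebraMap_mulVec_comp {m n K L L' : Type*} [Fintype n] [CommSemiring K] [Semiring L]
    [Semiring L'] [Algebra K L] [Algebra K L'] (σ : L →ₐ[K] L') (A : Matrix m n K) (v : n → L) :
    A.map (algebraMap K L') *ᵥ (σ ∘ v) = σ ∘ (A.map (algebraMap K L) *ᵥ v) := by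
  funext i
  simp [mulVec, dotProduct, map_sum]

theorem det_ne_zero_of_det_submatrix_id_ne_zero {k R : Type*} [Fintype k] [DecidableEq k]
    [CommRing R] {B : Matrix k k R} {p : k → k} (h : (B.submatrix id p).det ≠ 0) :
    B.det ≠ 0 := by
  by_cases hp : Injective p
  · let e := Equiv.ofBijective p (Finite.injective_iff_bijective.1 hp)
    rw [show B.submatrix id p = B.submatrix id e from rfl, det_permute'] at h
    exact right_ne_zero_of_mul h
  · obtain ⟨i, j, hij, hne⟩ : ∃ i j, p i = p j ∧ i ≠ j := by simpa [Injective] using hp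
    exact absurd (det_zero_of_column_eq hne fun a => by simp [hij]) h

variable {n : Type*} [Fintype n] [DecidableEq n] {L : Type*} [Field L]

theorem exists_det_submatrix_ne_zero {U : Matrix n n L} (hU : IsUnit U) {m : ℕ}
    {w : Fin m → n} (hw : Injective w) :
    ∃ s : Fin m → n, Injective s ∧ (U.submatrix w s).det ≠ 0 := by
  have hsurj : Surjective (U.submatrix w id).mulVecLin := by
    intro y
    obtain ⟨x, hx⟩ := mulVec_surjective_iff_isUnit.2 hU (extend w y 0)
    refine ⟨x, funext fun i => ?_⟩
    rw [← hw.extend_apply y 0 i, ← hx]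
    rfl
  rw [← LinearMap.range_eq_top, range_mulVecLin] at hsurj
  obtain ⟨s, hs⟩ := exists_linearIndependent_comp_of_span_eq_top hsurj (Module.finrank_fin_fun L)
  refine ⟨s, hs.injective.of_comp, ?_⟩
  exact ((isUnit_iff_isUnit_det _).1 (linearIndependent_cols_iff_isUnit.1 hs)).ne_zero

theorem mul_eq_mul_diagonal_of_mulVec_col {A U : Matrix n n L} {lam : n → L}
    (hcol : ∀ j, A *ᵥ U.col j = lam j • U.col j) : A * U = U * diagonal lam := by
  ext a b
  rw [mul_diagonal]
  simpa [mul_comm, mulVec, dotProduct, mul_apply] using congrFun (hcol b) a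

theorem exists_eq_smul_col_of_mulVec_eq_smul {A U : Matrix n n L} {lam : n → L} (hU : IsUnit U)
    (hlam : Injective lam) (hcol : ∀ j, A *ᵥ U.col j = lam j • U.col j) {i : n} {v : n → L}
    (hv : A *ᵥ v = lam i • v) : ∃ c : L, v = c • U.col i := by
  obtain ⟨x, rfl⟩ := mulVec_surjective_iff_isUnit.2 hU v
  have hx : diagonal lam *ᵥ x = lam i • x := mulVec_injective_iff_isUnit.2 hU <| by
    rw [mulVec_mulVec, ← mul_eq_mul_diagonal_of_mulVec_col hcol, ← mulVec_mulVec, hv, mulVec_smul]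
  have hsingle : x = Pi.single i (x i) := by
    funext j
    by_cases hj : j = i
    · subst hj; simp
    · have hxj : (lam j - lam i) * x j = 0 := by
        have := congrFun hx j
        simp only [mulVec_diagonal, Pi.smul_apply, smul_eq_mul] at this
        rw [sub_mul, this, sub_self]
      simp [hj, (mul_eq_zero.1 hxj).resolve_left (sub_ne_zero.2 (hlam.ne hj))]
  exact ⟨x i, by rw [hsingle, mulVec_single, op_smul_eq_smul, Pi.single_eq_same]⟩

theorem det_submatrix_ne_zero_of_apply_eigenvalue {K : Type*} [Field K] [Algebra K L]
    {A : Matrix n n K} {U : Matrix n n L} {lam : n → L} (hU : IsUnit U) (hlam : Injective lam)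
    (hcol : ∀ j, A.map (algebraMap K L) *ᵥ U.col j = lam j • U.col j) (σ : L →ₐ[K] L)
    {k : Type*} [Fintype k] [DecidableEq k] {r s t : k → n}
    (hst : ∀ i, σ (lam (s i)) = lam (t i)) (hdet : (U.submatrix r s).det ≠ 0) :
    (U.submatrix r t).det ≠ 0 := by
  have hconj (i : k) : ∃ c : L, σ ∘ U.col (s i) = c • U.col (t i) := by
    refine exists_eq_smul_col_of_mulVec_eq_smul hU hlam hcol ?_
    rw [map_algebraMap_mulVec_comp, hcol, ← hst]
    funext
    simp
  choose c hc using hconj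
  have hmap : σ.mapMatrix (U.submatrix r s) = U.submatrix r t * diagonal c := by
    ext a b
    rw [mul_diagonal]
    simpa [mul_comm] using congrFun (hc b) (r a)
  have hσdet : σ (U.submatrix r s).det ≠ 0 := (map_ne_zero σ).2 hdet
  rw [σ.map_det, hmap, det_mul] at hσdet
  exact left_ne_zero_of_mul hσdet

end Matrix

theorem stmt_1_general {K L : Type*} [Field K] [Field L] [DecidableEq L] [Algebra K L] {n m : ℕ}
    (M : Matrix (Fin n) (Fin n) K) (lam : Fin n → L) (U : Matrix (Fin n) (Fin n) L)
    (hdist : Function.Injective lam)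
    (hUinv : IsUnit U.det)
    (heig : ∀ i, (M.map (algebraMap K L)).mulVec (fun v => U v i) = lam i • (fun v => U v i))
    (hhom : ∀ S S' : Finset (Fin n), S.card = m → S'.card = m →
      ∃ g : L ≃ₐ[K] L, (S.image lam).image g = S'.image lam) :
    ∀ w s : Fin m → Fin n, Function.Injective w → Function.Injective s →
      (U.submatrix w s).det ≠ 0 := by
  intro w s hw hs
  have hU : IsUnit U := (isUnit_iff_isUnit_det U).2 hUinv
  obtain ⟨s₀, hs₀, hdet₀⟩ := exists_det_submatrix_ne_zero hU hw
  obtain ⟨σ, hσ⟩ := hhom (univ.image s₀) (univ.image s)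
    (by simp [card_image_of_injective _ hs₀]) (by simp [card_image_of_injective _ hs])
  have hmaps (i : Fin m) : ∃ j, σ (lam (s₀ i)) = lam (s j) := by
    have : σ (lam (s₀ i)) ∈ (univ.image s).image lam := hσ ▸ by simp
    simpa [eq_comm] using this
  choose p hp using hmaps
  exact det_ne_zero_of_det_submatrix_id_ne_zero <|
    det_submatrix_ne_zero_of_apply_eigenvalue hU hdist heig σ.toAlgHom hp hdet₀

/-- If the Galois group (acting on the distinct eigenvalues) is `m`-homogeneous,
then every `m × m` minor of the eigenvector matrix `U` is nonzero. -/
theorem stmt_1 {K L : Type*} [Field K] [Field L] [DecidableEq L] [Algebra K L] {n m : ℕ}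
    (hm1 : 1 ≤ m) (hmn : m ≤ n)
    (M : Matrix (Fin n) (Fin n) K) (lam : Fin n → L) (U : Matrix (Fin n) (Fin n) L)
    (hdist : Function.Injective lam)
    (hUinv : IsUnit U.det)
    (heig : ∀ i, (M.map (algebraMap K L)).mulVec (fun v => U v i) = lam i • (fun v => U v i))
    (hhom : ∀ S S' : Finset (Fin n), S.card = m → S'.card = m →
      ∃ g : L ≃ₐ[K] L, (S.image lam).image g = S'.image lam) :
    ∀ w s : Fin m → Fin n, Function.Injective w → Function.Injective s →
      (U.submatrix w s).det ≠ 0 :=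
  stmt_1_general M lam U hdist hUinv heig hhom
end

section
/- Let U be an n×n real (or complex) matrix with pairwise orthogonal nonzero columns u_1,…,u_n. If there exist subsets W, S ⊆ [n] with |W| = |S| = m such that the restricted vectors (u_i^W)_{i∈S} are linearly dependent, then the vectors (u_i^{[n]∖W})_{i∈[n]∖S} (restrictions of the complementary columns to the complementary rows) are also linearly dependent. -/
/-- For a real matrix with pairwise orthogonal nonzero columns, if the columns in
`S` restricted to the rows in `W` (with `|W| = |S| = m`) are linearly dependent, then the
complementary columns restricted to the complementary rows are also linearly dependent. -/
theorem stmt_4 {n m : ℕ} (U : Matrix (Fin n) (Fin n) ℝ)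
    (horth : ∀ i j, i ≠ j → ∑ v, U v i * U v j = 0)
    (hnz : ∀ i, (fun v => U v i) ≠ 0)
    (W S : Finset (Fin n)) (hW : W.card = m) (hS : S.card = m)
    (hdep : ¬ LinearIndependent ℝ (fun i : {x // x ∈ S} => fun w : {x // x ∈ W} => U w.1 i.1)) :
    ¬ LinearIndependent ℝ
      (fun i : {x // x ∈ (Sᶜ : Finset (Fin n))} =>
        fun w : {x // x ∈ (Wᶜ : Finset (Fin n))} => U w.1 i.1) := by
  classical
  intro hind
  obtain ⟨c, hc0, i₀, hci₀⟩ := Fintype.not_linearIndependent_iff.mp hdep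
  set x : Fin n → ℝ := fun v => ∑ i : {x // x ∈ S}, c i * U v i.1 with hxdef
  have hxW : ∀ w ∈ W, x w = 0 := by
    intro w hw
    have := congrFun hc0 ⟨w, hw⟩
    simpa [x, Finset.sum_apply] using this
  -- the independent family spans
  have hcard : Fintype.card {y // y ∈ (Sᶜ : Finset (Fin n))} =
      Module.finrank ℝ ({y // y ∈ (Wᶜ : Finset (Fin n))} → ℝ) := by
    simp [Module.finrank_fintype_fun_eq_card, Fintype.card_coe,
      Finset.card_compl, hW, hS]
  have hspan := hind.span_eq_top_of_card_eq_finrank' hcard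
  have hxmem : (fun w : {y // y ∈ (Wᶜ : Finset (Fin n))} => x w.1) ∈
      Submodule.span ℝ (Set.range (fun i : {y // y ∈ (Sᶜ : Finset (Fin n))} =>
        fun w : {y // y ∈ (Wᶜ : Finset (Fin n))} => U w.1 i.1)) := by
    rw [hspan]; trivial
  obtain ⟨d, hd⟩ := (Submodule.mem_span_range_iff_exists_fun ℝ).mp hxmem
  have hxWc : ∀ v ∈ Wᶜ, x v = ∑ j : {y // y ∈ (Sᶜ : Finset (Fin n))}, d j * U v j.1 := by
    intro v hv
    have := congrFun hd ⟨v, hv⟩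
    simpa [Finset.sum_apply, eq_comm] using this
  -- inner product of x with column j expands via c
  have hip : ∀ j : Fin n, ∑ v, x v * U v j =
      ∑ i : {y // y ∈ S}, c i * ∑ v, U v i.1 * U v j := by
    intro j
    simp only [x, Finset.sum_mul, Finset.mul_sum]
    rw [Finset.sum_comm]
    exact Finset.sum_congr rfl fun i _ => Finset.sum_congr rfl fun v _ => by ring
  -- inner product of x with column j ∈ Sᶜ is 0
  have horthx : ∀ j : {y // y ∈ (Sᶜ : Finset (Fin n))}, ∑ v, x v * U v j.1 = 0 := by
    intro j
    rw [hip]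
    apply Finset.sum_eq_zero
    intro i _
    have hne : i.1 ≠ j.1 := by
      intro h
      have hj := j.2
      rw [← h] at hj
      exact (Finset.mem_compl.mp hj) i.2
    rw [horth i.1 j.1 hne, mul_zero]
  -- sums weighted by x can be restricted to Wᶜ
  have hsumW : ∀ f : Fin n → ℝ, ∑ v, x v * f v = ∑ v ∈ Wᶜ, x v * f v := by
    intro f
    rw [← Finset.sum_add_sum_compl W]
    rw [Finset.sum_eq_zero (fun v hv => by rw [hxW v hv, zero_mul]), zero_add]
  -- ‖x‖² = 0
  have hnormsq : ∑ v, x v * x v = 0 := by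
    rw [hsumW x]
    calc ∑ v ∈ Wᶜ, x v * x v
        = ∑ v ∈ Wᶜ, ∑ j : {y // y ∈ (Sᶜ : Finset (Fin n))}, x v * (d j * U v j.1) := by
          refine Finset.sum_congr rfl fun v hv => ?_
          rw [hxWc v hv, Finset.mul_sum]
      _ = ∑ j : {y // y ∈ (Sᶜ : Finset (Fin n))}, ∑ v ∈ Wᶜ, x v * (d j * U v j.1) :=
          Finset.sum_comm
      _ = ∑ j : {y // y ∈ (Sᶜ : Finset (Fin n))}, d j * ∑ v ∈ Wᶜ, x v * U v j.1 := by
          refine Finset.sum_congr rfl fun j _ => ?_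
          rw [Finset.mul_sum]
          exact Finset.sum_congr rfl fun v _ => by ring
      _ = 0 := Finset.sum_eq_zero fun j _ => by rw [← hsumW, horthx j, mul_zero]
  -- hence x = 0
  have hx0 : ∀ v, x v = 0 := by
    intro v
    have := (Finset.sum_eq_zero_iff_of_nonneg
      (fun v _ => mul_self_nonneg (x v))).mp hnormsq v (Finset.mem_univ v)
    exact mul_self_eq_zero.mp this
  -- contradiction with c i₀ ≠ 0 and column i₀ nonzero
  have hB : ∑ v, x v * U v i₀.1 = 0 :=
    Finset.sum_eq_zero fun v _ => by rw [hx0 v, zero_mul]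
  rw [hip] at hB
  have hB' : c i₀ * ∑ v, U v i₀.1 * U v i₀.1 = 0 := by
    rw [← hB]
    symm
    apply Finset.sum_eq_single
    · intro i _ hne
      rw [horth i.1 i₀.1 (fun h => hne (Subtype.ext h)), mul_zero]
    · intro h
      exact absurd (Finset.mem_univ i₀) h
  have hQ : ∑ v, U v i₀.1 * U v i₀.1 ≠ 0 := by
    intro hQ0
    apply hnz i₀.1
    funext v
    have := (Finset.sum_eq_zero_iff_of_nonneg
      (fun v _ => mul_self_nonneg (U v i₀.1))).mp hQ0 v (Finset.mem_univ v)
    exact mul_self_eq_zero.mp this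
  rcases mul_eq_zero.mp hB' with h | h
  · exact hci₀ h
  · exact hQ h
end

section
/- Let U be an invertible n×n matrix with orthogonal nonzero columns. Then all minors of U of size m are nonzero if and only if all minors of U of size n−m are nonzero. -/
open Matrix

/-- Characterization of a vanishing minor as a linear dependence. -/
lemma depA {n k : ℕ} (M : Matrix (Fin n) (Fin n) ℝ) (w s : Fin k → Fin n)
    (hs : Function.Injective s) :
    (M.submatrix w s).det = 0 ↔
      ∃ c : Fin n → ℝ, c ≠ 0 ∧ (∀ j, j ∉ Set.range s → c j = 0) ∧
        ∀ i ∈ Set.range w, M.mulVec c i = 0 := by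
  rw [← Matrix.exists_mulVec_eq_zero_iff]
  constructor
  · rintro ⟨x, hx0, hx⟩
    refine ⟨fun j => ∑ k, if s k = j then x k else 0, ?_, ?_, ?_⟩
    · obtain ⟨k0, hk0⟩ := Function.ne_iff.mp hx0
      have hc : (fun j => ∑ k, if s k = j then x k else 0) (s k0) = x k0 := by
        simp only [hs.eq_iff]
        simp
      intro h
      rw [h] at hc
      exact hk0 hc.symm
    · intro j hj
      apply Finset.sum_eq_zero
      intro k _
      rw [if_neg]
      exact fun h => hj ⟨k, h⟩
    · rintro i ⟨i0, rfl⟩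
      have := congrFun hx i0
      simp only [Matrix.mulVec, dotProduct, Matrix.submatrix_apply,
        Pi.zero_apply] at this ⊢
      simp only [Finset.mul_sum, mul_ite, mul_zero]
      rw [Finset.sum_comm]
      simpa [Finset.sum_ite_eq] using this
  · rintro ⟨c, hc0, hsupp, hvan⟩
    refine ⟨fun k => c (s k), ?_, ?_⟩
    · intro h
      apply hc0
      funext j
      by_cases hj : j ∈ Set.range s
      · obtain ⟨k, rfl⟩ := hj
        exact congrFun h k
      · exact hsupp j hj
    · funext i
      have key : ((M.submatrix w s).mulVec fun k => c (s k)) i = M.mulVec c (w i) := by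
        simp only [Matrix.mulVec, dotProduct, Matrix.submatrix_apply]
        have h1 : (∑ x : Fin k, M (w i) (s x) * c (s x)) =
            ∑ j ∈ Finset.univ.image s, M (w i) j * c j :=
          (Finset.sum_image (f := fun j => M (w i) j * c j) (g := s) (fun a _ b _ h => hs h)).symm
        rw [h1]
        apply Finset.sum_subset (Finset.subset_univ _)
        intro j _ hj
        have hjr : j ∉ Set.range s := by
          rintro ⟨k0, hk0⟩
          exact hj (Finset.mem_image.mpr ⟨k0, Finset.mem_univ k0, hk0⟩)
        rw [hsupp j hjr, mul_zero]
      simp only [Pi.zero_apply]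
      rw [key]
      exact hvan _ ⟨i, rfl⟩

/-- Complementary minors vanish simultaneously for orthogonal-column matrices. -/
lemma keyEquiv {n : ℕ} (U : Matrix (Fin n) (Fin n) ℝ)
    (hUinv : IsUnit U.det)
    (horth : ∀ i j, i ≠ j → ∑ v, U v i * U v j = 0)
    (hnz : ∀ i, (fun v => U v i) ≠ 0)
    {a b : ℕ} (w s : Fin a → Fin n) (wc sc : Fin b → Fin n)
    (hw : Function.Injective w) (hs : Function.Injective s)
    (hwc : Function.Injective wc) (hsc : Function.Injective sc)
    (hrw : Set.range wc = (Set.range w)ᶜ) (hrs : Set.range sc = (Set.range s)ᶜ) :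
    (U.submatrix w s).det = 0 ↔ (U.submatrix wc sc).det = 0 := by
  have hd : ∀ j, (∑ v, U v j * U v j) ≠ 0 := by
    intro j h
    apply hnz j
    funext v
    have h0 : ∀ v' ∈ Finset.univ, (0:ℝ) ≤ U v' j * U v' j := fun v' _ => mul_self_nonneg _
    have := (Finset.sum_eq_zero_iff_of_nonneg h0).mp h v (Finset.mem_univ v)
    exact mul_self_eq_zero.mp this
  have hG : ∀ (c : Fin n → ℝ) (j : Fin n),
      Matrix.mulVec Uᵀ (U.mulVec c) j = (∑ v, U v j * U v j) * c j := by
    intro c j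
    simp only [Matrix.mulVec, dotProduct, Matrix.transpose_apply]
    have hswap : (∑ v, U v j * ∑ j', U v j' * c j')
        = ∑ j', (∑ v, U v j * U v j') * c j' := by
      simp only [Finset.mul_sum, Finset.sum_mul]
      rw [Finset.sum_comm]
      apply Finset.sum_congr rfl
      intro j' _
      apply Finset.sum_congr rfl
      intro v _
      ring
    rw [hswap, Finset.sum_eq_single j]
    · intro j' _ hne
      rw [horth j j' (Ne.symm hne), zero_mul]
    · intro h; exact absurd (Finset.mem_univ j) h
  have hinv1 : U * U⁻¹ = 1 := Matrix.mul_nonsing_inv U hUinv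
  have hinv2 : U⁻¹ * U = 1 := Matrix.nonsing_inv_mul U hUinv
  have hmw : ∀ j, j ∉ Set.range wc ↔ j ∈ Set.range w := by
    intro j; rw [hrw]; simp
  have hms : ∀ j, j ∈ Set.range sc ↔ j ∉ Set.range s := by
    intro j; rw [hrs]; simp
  have hT : (U.submatrix wc sc).det = 0 ↔ (Uᵀ.submatrix sc wc).det = 0 := by
    rw [← Matrix.det_transpose (U.submatrix wc sc), Matrix.transpose_submatrix]
  rw [hT, depA U w s hs, depA Uᵀ sc wc hwc]
  constructor
  · rintro ⟨c, hc0, hcs, hcw⟩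
    refine ⟨U.mulVec c, ?_, ?_, ?_⟩
    · intro h
      apply hc0
      have : c = U⁻¹.mulVec (U.mulVec c) := by
        rw [Matrix.mulVec_mulVec, hinv2, Matrix.one_mulVec]
      rw [this, h, Matrix.mulVec_zero]
    · intro j hj
      exact hcw j ((hmw j).mp hj)
    · intro i hi
      rw [hG c i, hcs i ((hms i).mp hi), mul_zero]
  · rintro ⟨y, hy0, hyw, hys⟩
    have hUc : U.mulVec (U⁻¹.mulVec y) = y := by
      rw [Matrix.mulVec_mulVec, hinv1, Matrix.one_mulVec]
    refine ⟨U⁻¹.mulVec y, ?_, ?_, ?_⟩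
    · intro h
      apply hy0
      rw [← hUc, h, Matrix.mulVec_zero]
    · intro j hj
      have h1 : Matrix.mulVec Uᵀ y j = 0 := hys j ((hms j).mpr hj)
      rw [← hUc, hG] at h1
      exact (mul_eq_zero.mp h1).resolve_left (hd j)
    · intro i hi
      rw [hUc]
      exact hyw i (by rw [hmw]; exact hi)

/-- Enumeration of the complement of the range of an injective map. -/
lemma complEnum {n a b : ℕ} (f : Fin a → Fin n) (hf : Function.Injective f)
    (hab : a + b = n) :
    ∃ g : Fin b → Fin n, Function.Injective g ∧ Set.range g = (Set.range f)ᶜ := by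
  have hcard : ((Finset.univ.image f)ᶜ : Finset (Fin n)).card = b := by
    rw [Finset.card_compl, Finset.card_image_of_injective _ hf]
    simp only [Finset.card_univ, Fintype.card_fin]
    omega
  refine ⟨fun k => ((Finset.univ.image f)ᶜ.orderIsoOfFin hcard k : Fin n), ?_, ?_⟩
  · intro x y h
    exact (Finset.orderIsoOfFin _ hcard).injective (Subtype.ext h)
  · ext j
    constructor
    · rintro ⟨k, rfl⟩
      have hmem := ((Finset.univ.image f)ᶜ.orderIsoOfFin hcard k).2
      simp only [Finset.mem_compl, Finset.mem_image] at hmem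
      rintro ⟨k0, hk0⟩
      exact hmem ⟨k0, Finset.mem_univ _, hk0⟩
    · intro hj
      have hj' : j ∈ (Finset.univ.image f)ᶜ := by
        simp only [Finset.mem_compl, Finset.mem_image]
        rintro ⟨k0, -, hk0⟩
        exact hj ⟨k0, hk0⟩
      obtain ⟨k, hk⟩ := (Finset.orderIsoOfFin _ hcard).surjective ⟨j, hj'⟩
      exact ⟨k, congrArg Subtype.val hk⟩

/-- For an invertible matrix with orthogonal nonzero columns, all minors of size `m`
are nonzero if and only if all minors of size `n - m` are nonzero. -/
theorem stmt_5 {n m : ℕ} (hmn : m ≤ n) (U : Matrix (Fin n) (Fin n) ℝ)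
    (hUinv : IsUnit U.det)
    (horth : ∀ i j, i ≠ j → ∑ v, U v i * U v j = 0)
    (hnz : ∀ i, (fun v => U v i) ≠ 0) :
    (∀ w s : Fin m → Fin n, Function.Injective w → Function.Injective s →
        (U.submatrix w s).det ≠ 0) ↔
      (∀ w s : Fin (n - m) → Fin n, Function.Injective w → Function.Injective s →
        (U.submatrix w s).det ≠ 0) := by
  constructor
  · intro H wc sc hwc hsc hdet
    obtain ⟨w, hw, hwr⟩ := complEnum (b := m) wc hwc (by omega)
    obtain ⟨s, hs, hsr⟩ := complEnum (b := m) sc hsc (by omega)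
    exact H w s hw hs ((keyEquiv U hUinv horth hnz w s wc sc hw hs hwc hsc
      (by rw [hwr, compl_compl]) (by rw [hsr, compl_compl])).mpr hdet)
  · intro H w s hw hs hdet
    obtain ⟨wc, hwc, hwr⟩ := complEnum (b := n - m) w hw (by omega)
    obtain ⟨sc, hsc, hsr⟩ := complEnum (b := n - m) s hs (by omega)
    exact H wc sc hwc hsc ((keyEquiv U hUinv horth hnz w s wc sc hw hs hwc hsc
      hwr hsr).mp hdet)
end

section
/- Let U be an invertible n×n matrix over a field. All minors of U of all sizes 1 ≤ m ≤ n are nonzero if and only if for every nonzero vector f, ‖f‖_0 + ‖U f‖_0 ≥ n + 1, where ‖·‖_0 denotes the number of nonzero coordinates. -/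
private lemma sum_orderEmbOfFin_eq {K : Type*} [AddCommMonoid K] {n m : ℕ}
    (A : Finset (Fin n)) (h : A.card = m) (g : Fin n → K) (hg : ∀ k ∉ A, g k = 0) :
    ∑ i : Fin m, g (A.orderEmbOfFin h i) = ∑ k : Fin n, g k := by
  have himg : Finset.image (A.orderEmbOfFin h) Finset.univ = A := by
    ext x
    simp only [Finset.mem_image, Finset.mem_univ, true_and]
    constructor
    · rintro ⟨i, rfl⟩; exact A.orderEmbOfFin_mem h i
    · intro hx
      have : x ∈ Set.range (A.orderEmbOfFin h) := by
        rw [Finset.range_orderEmbOfFin]; exact hx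
      exact this
  calc ∑ i : Fin m, g (A.orderEmbOfFin h i)
      = ∑ x ∈ Finset.image (A.orderEmbOfFin h) Finset.univ, g x :=
        (Finset.sum_image (fun a _ b _ hab => (A.orderEmbOfFin h).injective hab)).symm
    _ = ∑ x ∈ A, g x := by rw [himg]
    _ = ∑ k : Fin n, g k := Finset.sum_subset (Finset.subset_univ A) (fun x _ hx => hg x hx)

/-- Tao-type uncertainty principle: For an invertible matrix `U`, all minors of all
sizes `1 ≤ m ≤ n` are nonzero if and only if `‖f‖₀ + ‖U f‖₀ ≥ n + 1` for every nonzero `f`. -/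
theorem stmt_6 {K : Type*} [Field K] [DecidableEq K] {n : ℕ}
    (U : Matrix (Fin n) (Fin n) K) (hUinv : IsUnit U.det) :
    (∀ m : ℕ, 1 ≤ m → m ≤ n → ∀ w s : Fin m → Fin n, Function.Injective w →
        Function.Injective s → (U.submatrix w s).det ≠ 0) ↔
      (∀ f : Fin n → K, f ≠ 0 →
        (Finset.univ.filter fun i => f i ≠ 0).card +
          (Finset.univ.filter fun i => U.mulVec f i ≠ 0).card ≥ n + 1) := by
  constructor
  · -- all minors nonzero → uncertainty
    intro hminor f hf
    by_contra hlt
    push_neg at hlt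
    have hsum : (Finset.univ.filter fun i => f i ≠ 0).card +
        (Finset.univ.filter fun i => U.mulVec f i ≠ 0).card ≤ n := by omega
    let S : Finset (Fin n) := Finset.univ.filter fun i => f i ≠ 0
    let T : Finset (Fin n) := Finset.univ.filter fun i => U.mulVec f i ≠ 0
    have hm1 : 0 < S.card := by
      obtain ⟨i, hi⟩ := Function.ne_iff.mp hf
      exact Finset.card_pos.mpr ⟨i, Finset.mem_filter.mpr ⟨Finset.mem_univ i, hi⟩⟩
    have hmn : S.card ≤ n := hsum.trans' (Nat.le_add_right _ _)
    have hsum' : S.card + T.card ≤ n := hsum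
    have hTc : S.card ≤ Tᶜ.card := by
      have : Tᶜ.card = n - T.card := by
        rw [Finset.card_compl, Fintype.card_fin]
      omega
    obtain ⟨W, hWsub, hWcard⟩ := Finset.exists_subset_card_eq hTc
    let w : Fin S.card ↪o Fin n := W.orderEmbOfFin hWcard
    let s : Fin S.card ↪o Fin n := S.orderEmbOfFin rfl
    have hker : ∃ v, v ≠ 0 ∧ (U.submatrix w s).mulVec v = 0 := by
      refine ⟨fun i => f (s i), ?_, ?_⟩
      · have i0 : Fin S.card := ⟨0, hm1⟩
        intro h0
        have h1 : f (s i0) = 0 := congrFun h0 i0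
        have hmem : s i0 ∈ S := S.orderEmbOfFin_mem rfl i0
        exact (Finset.mem_filter.mp hmem).2 h1
      · funext j
        have hrow : U.mulVec f (w j) = 0 := by
          have hWj : w j ∈ Tᶜ := hWsub (W.orderEmbOfFin_mem hWcard j)
          by_contra hne
          exact (Finset.mem_compl.mp hWj) (Finset.mem_filter.mpr ⟨Finset.mem_univ _, hne⟩)
        have key : ∑ i : Fin S.card, (fun k => U (w j) k * f k) (S.orderEmbOfFin rfl i)
            = ∑ k : Fin n, U (w j) k * f k := by
          apply sum_orderEmbOfFin_eq S rfl (fun k => U (w j) k * f k)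
          intro k hk
          have hfk : f k = 0 := by
            by_contra hfk
            exact hk (Finset.mem_filter.mpr ⟨Finset.mem_univ k, hfk⟩)
          rw [hfk, mul_zero]
        simp only [Matrix.mulVec, dotProduct, Matrix.submatrix_apply,
          Pi.zero_apply] at *
        rw [key, hrow]
    have hdet : (U.submatrix w s).det = 0 := by
      rw [← Matrix.exists_mulVec_eq_zero_iff]
      obtain ⟨v, hv, hv0⟩ := hker
      exact ⟨v, hv, hv0⟩
    exact hminor S.card hm1 hmn w s w.injective s.injective hdet
  · -- uncertainty → all minors nonzero
    intro hunc m hm1 hmn w s hw hs hdet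
    obtain ⟨v, hv, hv0⟩ := Matrix.exists_mulVec_eq_zero_iff.mpr hdet
    classical
    set f : Fin n → K := Function.extend s v (0 : Fin n → K) with hf
    have hfs : ∀ i, f (s i) = v i := fun i => hs.extend_apply v (0 : Fin n → K) i
    have hfz : ∀ k, (¬ ∃ i, s i = k) → f k = 0 := by
      intro k hk
      rw [hf, Function.extend_apply' v (0 : Fin n → K) k hk]
      rfl
    have hfne : f ≠ 0 := by
      obtain ⟨i, hi⟩ := Function.ne_iff.mp hv
      intro h0
      exact hi (by rw [← hfs i, h0]; rfl)
    have hUf : ∀ j, U.mulVec f (w j) = 0 := by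
      intro j
      have h1 : ∑ x ∈ Finset.univ.image s, U (w j) x * f x
          = ∑ i : Fin m, U (w j) (s i) * f (s i) :=
        Finset.sum_image (fun a _ b _ hab => hs hab)
      have h2 : ∑ x ∈ Finset.univ.image s, U (w j) x * f x = ∑ k : Fin n, U (w j) k * f k := by
        apply Finset.sum_subset (Finset.subset_univ _)
        intro x _ hx
        have : f x = 0 := by
          apply hfz
          rintro ⟨i, rfl⟩
          exact hx (Finset.mem_image_of_mem s (Finset.mem_univ i))
        rw [this, mul_zero]
      have hkerj : ∑ i : Fin m, U (w j) (s i) * v i = 0 := by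
        have := congrFun hv0 j
        simpa [Matrix.mulVec, dotProduct, Matrix.submatrix_apply] using this
      simp only [Matrix.mulVec, dotProduct]
      rw [← h2, h1]
      simp only [hfs]
      exact hkerj
    have hScard : (Finset.univ.filter fun i => f i ≠ 0).card ≤ m := by
      have hsub : (Finset.univ.filter fun i => f i ≠ 0) ⊆ Finset.univ.image s := by
        intro x hx
        rw [Finset.mem_filter] at hx
        by_contra hxi
        apply hx.2
        apply hfz
        rintro ⟨i, rfl⟩
        exact hxi (Finset.mem_image_of_mem s (Finset.mem_univ i))
      calc (Finset.univ.filter fun i => f i ≠ 0).card ≤ (Finset.univ.image s).card :=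
            Finset.card_le_card hsub
        _ = m := by rw [Finset.card_image_of_injective _ hs, Finset.card_univ, Fintype.card_fin]
    have hTcard : (Finset.univ.filter fun i => U.mulVec f i ≠ 0).card ≤ n - m := by
      have hsub : (Finset.univ.filter fun i => U.mulVec f i ≠ 0) ⊆ (Finset.univ.image w)ᶜ := by
        intro x hx
        rw [Finset.mem_filter] at hx
        rw [Finset.mem_compl]
        intro hxw
        obtain ⟨j, _, rfl⟩ := Finset.mem_image.mp hxw
        exact hx.2 (hUf j)
      calc (Finset.univ.filter fun i => U.mulVec f i ≠ 0).card
          ≤ (Finset.univ.image w)ᶜ.card := Finset.card_le_card hsub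
        _ = n - m := by
            rw [Finset.card_compl, Finset.card_image_of_injective _ hw, Finset.card_univ,
              Fintype.card_fin, Fintype.card_fin]
    have := hunc f hfne
    omega
end

section
/- Let U be an invertible n×n matrix over a field such that all minors of U are nonzero. Then for every nonzero vector f, the vector U* f has at least n + 1 − ‖f‖_0 nonzero entries. -/
/-- If all minors of an invertible matrix `U` are nonzero, then for every nonzero
`f`, the vector `U.transpose f` has at least `n + 1 - ‖f‖₀` nonzero entries. -/
theorem stmt_7 {K : Type*} [Field K] [DecidableEq K] {n : ℕ}
    (U : Matrix (Fin n) (Fin n) K) (hUinv : IsUnit U.det)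
    (hminors : ∀ m : ℕ, 1 ≤ m → m ≤ n → ∀ w s : Fin m → Fin n, Function.Injective w →
      Function.Injective s → (U.submatrix w s).det ≠ 0) :
    ∀ f : Fin n → K, f ≠ 0 →
      (Finset.univ.filter fun i => U.transpose.mulVec f i ≠ 0).card ≥
        n + 1 - (Finset.univ.filter fun i => f i ≠ 0).card := by
  intro f hf
  by_contra h
  push_neg at h
  set S := Finset.univ.filter fun i => f i ≠ 0 with hS
  set Z := Finset.univ.filter fun i => U.transpose.mulVec f i = 0 with hZ
  obtain ⟨i0, hi0'⟩ := Function.ne_iff.mp hf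
  have hi0 : f i0 ≠ 0 := by simpa using hi0'
  have hi0S : i0 ∈ S := by simp [hS, hi0]
  have hs1 : 1 ≤ S.card := Finset.card_pos.mpr ⟨i0, hi0S⟩
  have hsn : S.card ≤ n := by
    simpa using (Finset.card_le_univ S)
  have hsplit : Z.card + (Finset.univ.filter fun i => U.transpose.mulVec f i ≠ 0).card = n := by
    have := Finset.card_filter_add_card_filter_not
      (s := (Finset.univ : Finset (Fin n))) (p := fun i => U.transpose.mulVec f i = 0)
    simpa [hZ] using this
  have hZcard : S.card ≤ Z.card := by omega
  obtain ⟨T, hTZ, hTcard⟩ := Finset.exists_subset_card_eq hZcard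
  set w := S.orderEmbOfFin (rfl : S.card = S.card) with hw
  set t := T.orderEmbOfFin hTcard with ht
  have hdet := hminors S.card hs1 hsn w t w.injective t.injective
  apply hdet
  rw [← Matrix.det_transpose]
  rw [← Matrix.exists_mulVec_eq_zero_iff]
  refine ⟨f ∘ w, ?_, ?_⟩
  · obtain ⟨a, ha⟩ := (Finset.range_orderEmbOfFin S rfl).ge hi0S
    intro hcontr
    have := congrFun hcontr a
    simp only [Function.comp_apply, Pi.zero_apply] at this
    rw [← hw] at ha
    rw [ha] at this
    exact hi0 this
  · funext b
    have himg : Finset.image w Finset.univ = S := by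
      apply Finset.coe_injective
      simp [Set.image_univ, Finset.range_orderEmbOfFin, hw]
    have hsum : ∀ g : Fin n → K, ∑ a : Fin S.card, g (w a) = ∑ i ∈ S, g i := by
      intro g
      conv_rhs => rw [← himg]
      rw [Finset.sum_image (fun a _ b _ hab => w.injective hab)]
    have key : (U.submatrix w t).transpose.mulVec (f ∘ w) b
        = U.transpose.mulVec f (t b) := by
      simp only [Matrix.mulVec, Matrix.transpose_apply, Matrix.submatrix_apply,
        dotProduct, Function.comp_apply]
      rw [hsum (fun i => U i (t b) * f i)]
      refine Finset.sum_subset (Finset.subset_univ S) ?_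
      intro i _ hiS
      have : f i = 0 := by
        by_contra hfi
        exact hiS (by simp [hS, hfi])
      simp [this]
    have htbZ : t b ∈ Z := hTZ (T.orderEmbOfFin_mem hTcard b)
    have : U.transpose.mulVec f (t b) = 0 := by
      simpa [hZ] using htbZ
    exact key.trans this
end

section
/- Let M be a real symmetric n×n matrix with distinct eigenvalues whose orthonormal eigenvector matrix U has all minors (of all sizes) nonzero. Then for every nonzero x ∈ ℝ^n, the walk matrix W(x) = [x, Mx, …, M^{n−1}x] satisfies rank(W(x)) ≥ n + 1 − ‖x‖_0. -/
open Matrix Finset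

/-- For a real symmetric matrix with distinct eigenvalues whose orthonormal
eigenvector matrix `U` has all minors nonzero, the walk matrix satisfies
`rank(W(x)) ≥ n + 1 - ‖x‖₀` for every nonzero `x`. -/
theorem stmt_10 {n : ℕ} (M : Matrix (Fin n) (Fin n) ℝ) (U : Matrix (Fin n) (Fin n) ℝ)
    (lam : Fin n → ℝ)
    (hsymm : M.IsSymm) (hdist : Function.Injective lam)
    (hU : U.transpose * U = 1)
    (heig : ∀ i, M.mulVec (fun v => U v i) = lam i • (fun v => U v i))
    (hminors : ∀ m : ℕ, 1 ≤ m → m ≤ n → ∀ w s : Fin m → Fin n, Function.Injective w →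
      Function.Injective s → (U.submatrix w s).det ≠ 0)
    (x : Fin n → ℝ) (hx : x ≠ 0) :
    (Matrix.of fun (i j : Fin n) => (M ^ (j : ℕ)).mulVec x i).rank ≥
      n + 1 - (Finset.univ.filter fun i => x i ≠ 0).card := by
  classical
  have hUU : U * U.transpose = 1 := mul_eq_one_comm.mp hU
  have hdetU : IsUnit U.det := Matrix.isUnit_det_of_left_inverse hU
  set c : Fin n → ℝ := U.transpose.mulVec x with hc
  -- c j = ∑ v, U v j * x v
  have hcj : ∀ j, c j = ∑ v, U v j * x v := by
    intro j
    simp [hc, Matrix.mulVec, dotProduct, Matrix.transpose_apply]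
  -- x = U.mulVec c
  have hxc : x = U.mulVec c := by
    rw [hc, Matrix.mulVec_mulVec, hUU, Matrix.one_mulVec]
  -- M * U = U * diagonal lam
  have hMU : M * U = U * Matrix.diagonal lam := by
    ext i k
    have := congrFun (heig k) i
    simpa [Matrix.mulVec, dotProduct, Matrix.mul_apply, Matrix.diagonal,
      mul_comm] using this
  have hMjU : ∀ j : ℕ, M ^ j * U = U * Matrix.diagonal (fun k => lam k ^ j) := by
    intro j
    induction j with
    | zero => simp
    | succ j ih =>
      rw [pow_succ', Matrix.mul_assoc, ih, ← Matrix.mul_assoc, hMU, Matrix.mul_assoc,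
        Matrix.diagonal_mul_diagonal]
      simp [pow_succ']
  -- W = U * (diagonal c * vandermonde lam)
  have hW : (Matrix.of fun (i j : Fin n) => (M ^ (j : ℕ)).mulVec x i)
      = U * (Matrix.diagonal c * Matrix.vandermonde lam) := by
    ext i j
    have : (M ^ (j : ℕ)).mulVec x = ((M ^ (j : ℕ)) * U).mulVec c := by
      rw [hxc, Matrix.mulVec_mulVec]
    rw [Matrix.of_apply, this, hMjU]
    simp [Matrix.mulVec, dotProduct, Matrix.mul_apply, Matrix.diagonal,
      Matrix.vandermonde, Finset.sum_ite_eq, mul_comm, mul_assoc, mul_left_comm]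
  have hvand : IsUnit (Matrix.vandermonde lam).det :=
    (Matrix.det_vandermonde_ne_zero_iff.mpr hdist).isUnit
  -- rank W = card of support of c
  have hrank : (Matrix.of fun (i j : Fin n) => (M ^ (j : ℕ)).mulVec x i).rank
      = (Finset.univ.filter fun i => c i ≠ 0).card := by
    rw [hW, Matrix.rank_mul_eq_right_of_isUnit_det U _ hdetU]
    rw [Matrix.rank_mul_eq_left_of_isUnit_det _ _ hvand, Matrix.rank_diagonal]
    rw [Fintype.card_subtype]
  rw [hrank]
  -- uncertainty principle
  set S := Finset.univ.filter fun i => x i ≠ 0 with hS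
  set T := Finset.univ.filter fun i => c i ≠ 0 with hT
  set s := S.card
  set t := T.card
  -- suffices s + t ≥ n + 1
  suffices h : n + 1 ≤ s + t by omega
  by_contra hcon
  push_neg at hcon
  have hst : s + t ≤ n := by omega
  have hs1 : 1 ≤ s := by
    rcases Function.ne_iff.mp hx with ⟨i, hi⟩
    simp only [Pi.zero_apply] at hi
    have : i ∈ S := by simp [hS, hi]
    exact Finset.card_pos.mpr ⟨i, this⟩
  have hsn : s ≤ n := le_trans (by omega) hst
  have hTc : s ≤ Tᶜ.card := by
    have : Tᶜ.card = n - t := by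
      rw [Finset.card_compl, Fintype.card_fin]
    omega
  obtain ⟨K, hKT, hK⟩ := Finset.exists_subset_card_eq hTc
  -- injections
  let w : Fin s → Fin n := fun a => (S.orderIsoOfFin rfl a : Fin n)
  let k : Fin s → Fin n := fun a => (K.orderIsoOfFin hK a : Fin n)
  have hw : Function.Injective w := fun a b hab => (S.orderIsoOfFin rfl).injective (Subtype.ext hab)
  have hk : Function.Injective k := fun a b hab => (K.orderIsoOfFin hK).injective (Subtype.ext hab)
  have hdet := hminors s hs1 hsn w k hw hk
  have hdetT : ((U.submatrix w k).transpose).det ≠ 0 := by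
    rw [Matrix.det_transpose]; exact hdet
  -- the vector x ∘ w is killed
  have hkill : ((U.submatrix w k).transpose).mulVec (fun a => x (w a)) = 0 := by
    funext b
    have hsum : ∑ a : Fin s, U (w a) (k b) * x (w a) = ∑ v ∈ S, U v (k b) * x v := by
      rw [← Finset.sum_attach S (fun v => U v (k b) * x v)]
      exact Fintype.sum_equiv (S.orderIsoOfFin rfl).toEquiv _ _ (fun a => rfl)
    have hSfull : ∑ v ∈ S, U v (k b) * x v = ∑ v, U v (k b) * x v := by
      apply Finset.sum_subset (Finset.subset_univ S)
      intro v _ hv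
      have : x v = 0 := by
        by_contra hxv
        exact hv (by simp [hS, hxv])
      simp [this]
    have hckb : c (k b) = 0 := by
      have hkb : k b ∈ Tᶜ := hKT (K.orderIsoOfFin hK b).2
      have : k b ∉ T := Finset.mem_compl.mp hkb
      by_contra hne
      exact this (by simp [hT, hne])
    have : ((U.submatrix w k).transpose).mulVec (fun a => x (w a)) b
        = ∑ a : Fin s, U (w a) (k b) * x (w a) := by
      simp [Matrix.mulVec, dotProduct, Matrix.transpose_apply, Matrix.submatrix_apply]
    rw [Pi.zero_apply, this, hsum, hSfull, ← hcj, hckb]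
  have hzero := Matrix.eq_zero_of_mulVec_eq_zero hdetT hkill
  -- but x ∘ w is nonzero
  have ha : (⟨0, hs1⟩ : Fin s) = (⟨0, hs1⟩ : Fin s) := rfl
  have hmem : w ⟨0, hs1⟩ ∈ S := (S.orderIsoOfFin rfl ⟨0, hs1⟩).2
  have hxw : x (w ⟨0, hs1⟩) ≠ 0 := by
    have := Finset.mem_filter.mp hmem
    exact this.2
  exact hxw (congrFun hzero ⟨0, hs1⟩)
end

section
/- Let M be a diagonalizable n×n matrix over K whose characteristic polynomial is irreducible over K with Galois group acting transitively on its n distinct roots. Then no entry of the eigenvector matrix U is zero, i.e., every eigenvector of M has full support. -/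
/-- If the characteristic polynomial of a diagonalizable matrix is irreducible
(so the Galois group acts transitively on the `n` distinct roots), then no entry of the
eigenvector matrix `U` is zero. -/
theorem stmt_12 {K L : Type*} [Field K] [Field L] [Algebra K L] {n : ℕ}
    (M : Matrix (Fin n) (Fin n) K) (lam : Fin n → L) (U : Matrix (Fin n) (Fin n) L)
    (hirr : Irreducible M.charpoly)
    (hdist : Function.Injective lam)
    (hUinv : IsUnit U.det)
    (heig : ∀ i, (M.map (algebraMap K L)).mulVec (fun v => U v i) = lam i • (fun v => U v i))
    (htrans : ∀ i j : Fin n, ∃ g : L ≃ₐ[K] L, g (lam i) = lam j) :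
    ∀ v i : Fin n, U v i ≠ 0 := by
  intro v i hvi
  set M' := M.map (algebraMap K L) with hM'
  -- every column of U is nonzero
  have hcol : ∀ j : Fin n, ∃ w, U w j ≠ 0 := by
    intro j
    by_contra h
    push_neg at h
    exact hUinv.ne_zero (Matrix.det_eq_zero_of_column_eq_zero j h)
  obtain ⟨w0, hw0⟩ := hcol i
  -- key matrix identity: M' * U = U * diagonal lam
  have hMU : M' * U = U * Matrix.diagonal lam := by
    ext w k
    have h1 := congrFun (heig k) w
    simp only [Matrix.mulVec, dotProduct, Pi.smul_apply, smul_eq_mul] at h1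
    rw [Matrix.mul_apply, Matrix.mul_diagonal, h1, mul_comm]
  -- row v of U is zero
  have hrow : ∀ j : Fin n, U v j = 0 := by
    intro j
    obtain ⟨g, hg⟩ := htrans i j
    set x : Fin n → L := fun w => g (U w i) with hxdef
    -- x is an eigenvector for lam j
    have hx : M'.mulVec x = lam j • x := by
      funext w
      have h1 := congrFun (heig i) w
      simp only [Matrix.mulVec, dotProduct, Pi.smul_apply, smul_eq_mul] at h1 ⊢
      have hterm : ∀ k, M' w k * g (U k i) = g (M' w k * U k i) := by
        intro k
        rw [map_mul]
        congr 1
        simp [hM', Matrix.map_apply, AlgEquiv.commutes]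
      calc ∑ k, M' w k * g (U k i) = ∑ k, g (M' w k * U k i) := by
            exact Finset.sum_congr rfl (fun k _ => hterm k)
        _ = g (∑ k, M' w k * U k i) := (map_sum g _ _).symm
        _ = g (lam i * U w i) := by rw [h1]
        _ = lam j * g (U w i) := by rw [map_mul, hg]
    set y : Fin n → L := U⁻¹.mulVec x with hydef
    have hxy : U.mulVec y = x := by
      rw [hydef, Matrix.mulVec_mulVec, Matrix.mul_nonsing_inv _ hUinv, Matrix.one_mulVec]
    -- diagonal lam *ᵥ y = lam j • y
    have hDy : (Matrix.diagonal lam).mulVec y = lam j • y := by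
      have h2 : U.mulVec ((Matrix.diagonal lam).mulVec y) = U.mulVec (lam j • y) := by
        rw [Matrix.mulVec_mulVec, ← hMU, ← Matrix.mulVec_mulVec, hxy, hx,
          Matrix.mulVec_smul, hxy]
      have h3 := congrArg (U⁻¹.mulVec) h2
      simpa only [Matrix.mulVec_mulVec, ← mul_assoc, Matrix.nonsing_inv_mul _ hUinv, Matrix.one_mul,
        Matrix.one_mulVec] using h3
    have hy : ∀ k, k ≠ j → y k = 0 := by
      intro k hk
      have h4 := congrFun hDy k
      simp only [Matrix.mulVec_diagonal, Pi.smul_apply, smul_eq_mul] at h4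
      have h5 : (lam k - lam j) * y k = 0 := by ring_nf; linear_combination h4
      rcases mul_eq_zero.mp h5 with h6 | h6
      · exact absurd (hdist (sub_eq_zero.mp h6)) hk
      · exact h6
    -- x v = U v j * y j
    have hxv : x v = U v j * y j := by
      rw [← hxy]
      simp only [Matrix.mulVec, dotProduct]
      rw [Finset.sum_eq_single j]
      · intro k _ hk
        rw [hy k hk, mul_zero]
      · intro h; exact absurd (Finset.mem_univ j) h
    have hxv0 : x v = 0 := by simp [hxdef, hvi]
    rw [hxv0] at hxv
    rcases mul_eq_zero.mp hxv.symm with h6 | h6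
    · exact h6
    · -- y j = 0 means x = 0, so column i is zero: contradiction
      exfalso
      have hx0 : x = 0 := by
        funext w
        rw [← hxy]
        simp only [Matrix.mulVec, dotProduct, Pi.zero_apply]
        apply Finset.sum_eq_zero
        intro k _
        rcases eq_or_ne k j with rfl | hk
        · rw [h6, mul_zero]
        · rw [hy k hk, mul_zero]
      have : g (U w0 i) = 0 := congrFun hx0 w0
      exact hw0 (by simpa using g.injective (by simpa using this))
  exact hUinv.ne_zero (Matrix.det_eq_zero_of_row_eq_zero v hrow)
end

section
/- Let L be the Laplacian matrix of a connected graph G on n vertices with characteristic polynomial φ_L(λ) = λ·ξ(λ), and let U be an orthonormal eigenvector matrix of L whose first column is the constant vector 1/√n. If the Galois group of ξ (acting on the n−1 roots of ξ) is m-homogeneous for every m, e.g., contains A_{n−1}, then all minors of U of every size are nonzero. -/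
/-!
Over `L` the Laplacian has eigenvectors with entries in `L`, which `ι` sends to nonzero multiples
of the columns of `U`, and which an automorphism `σ` of `L` permutes up to scalars along its
action on the eigenvalues. So a minor `det U[w, s]` vanishes iff `det U[w, t]` does whenever `σ`
carries the eigenvalues indexed by `s` to those indexed by `t`; by homogeneity one vanishing minor
forces every minor on the rows `w` whose columns avoid `0`, resp. contain `0`, to vanish. As column
`0` of `U` is constant, the rows `w` of `U` are then linearly dependent modulo that column, resp.
(subtracting one row from the others) linearly dependent, contradicting the invertibility of `U`.
-/

open Matrix Polynomial

namespace Matrix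

variable {F : Type*} [Field F]

theorem exists_ne_zero_vecMul_eq_zero_of_det_submatrix_eq_zero {α : Type*} :
    ∀ {m : ℕ} (A : Matrix (Fin m) α F), (∀ t : Fin m → α, (A.submatrix id t).det = 0) →
      ∃ a ≠ 0, a ᵥ* A = 0
  | 0, _, h => by simpa using h finZeroElim
  | m + 1, A, h => by
    by_cases htop : ∃ t : Fin m → α, (A.submatrix Fin.castSucc t).det ≠ 0
    · obtain ⟨t, ht⟩ := htop
      -- the cofactors of the last column of `A.submatrix id (Fin.snoc t j)` do not depend on `j`
      refine ⟨fun i => (-1) ^ (i + m : ℕ) * (A.submatrix i.succAbove t).det, fun h0 => ht ?_, ?_⟩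
      · simpa [Fin.succAbove_last] using congrFun h0 (Fin.last m)
      · ext j
        have hj := h (Fin.snoc t j)
        rw [det_succ_column _ (Fin.last m)] at hj
        simpa [vecMul, dotProduct, Fin.succAbove_last, mul_assoc, mul_comm (A _ j),
          submatrix_submatrix] using hj
    · push Not at htop
      obtain ⟨a, ha, hA⟩ := exists_ne_zero_vecMul_eq_zero_of_det_submatrix_eq_zero
        (A.submatrix Fin.castSucc id) htop
      refine ⟨Fin.snoc a 0, fun h0 => ha ?_, ?_⟩
      · ext k
        simpa using congrFun h0 k.castSucc
      · ext j
        simpa [vecMul, dotProduct, Fin.sum_univ_castSucc] using congrFun hA j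

theorem det_eq_zero_iff_of_map_eq_mul {K : Type*} [Field K] {n : Type*} [Fintype n]
    [DecidableEq n] (f : K →+* F) {A : Matrix n n K} {B : Matrix n n F} {c : n → F}
    (hc : ∀ j, c j ≠ 0) (hAB : ∀ i j, f (A i j) = B i j * c j) : A.det = 0 ↔ B.det = 0 := by
  have hmap : A.map f = B * diagonal c := by
    ext i j
    simp [hAB]
  rw [← map_eq_zero_iff f f.injective, RingHom.map_det, RingHom.mapMatrix_apply, hmap, det_mul,
    det_diagonal, mul_eq_zero, or_iff_left (Finset.prod_ne_zero_iff.mpr fun j _ => hc j)]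

theorem det_submatrix_eq_zero_of_not_injective {R : Type*} [CommRing R] {α β : Type*}
    {m : ℕ} (A : Matrix α β R) (r : Fin m → α) {t : Fin m → β} (ht : ¬ Function.Injective t) :
    (A.submatrix r t).det = 0 := by
  obtain ⟨k, k', hkk', hne⟩ := Function.not_injective_iff.mp ht
  exact det_zero_of_column_eq hne fun i => by simp [hkk']

theorem det_submatrix_cons_eq_mul_det {R : Type*} [CommRing R] {β : Type*} {m : ℕ}
    (M : Matrix (Fin (m + 1)) β R) {j₀ : β} {c : R} (hc : ∀ i, M i j₀ = c) (t : Fin m → β) :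
    (M.submatrix id (Fin.cons j₀ t)).det =
      c * ((of fun k j => M k.succ j - M 0 j).submatrix id t).det := by
  set t₀ : Fin (m + 1) → β := Fin.cons j₀ t
  -- subtracting row `0` from the others clears column `j₀` below its top entry `c`
  let B : Matrix (Fin (m + 1)) (Fin (m + 1)) R :=
    of fun i j => M i (t₀ j) - (if i = 0 then 0 else 1) * M 0 (t₀ j)
  have hB : (M.submatrix id t₀).det = B.det :=
    det_eq_of_forall_row_eq_smul_add_const (fun i => if i = 0 then 0 else 1) 0 (if_pos rfl)
      fun i j => by by_cases hi : i = 0 <;> simp [B, hi]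
  rw [hB, det_succ_column_zero, Fin.sum_univ_succ]
  simp [B, t₀, hc, submatrix, Fin.succ_ne_zero]

theorem exists_ne_zero_vecMul_eq_zero_of_det_submatrix_cons_eq_zero {β : Type*} {m : ℕ}
    (M : Matrix (Fin (m + 1)) β F) {j₀ : β} {c : F} (hc : ∀ i, M i j₀ = c) (hc0 : c ≠ 0)
    (h : ∀ t : Fin m → β, (M.submatrix id (Fin.cons j₀ t)).det = 0) : ∃ a ≠ 0, a ᵥ* M = 0 := by
  let D : Matrix (Fin m) β F := of fun k j => M k.succ j - M 0 j
  obtain ⟨a, ha, hD⟩ := exists_ne_zero_vecMul_eq_zero_of_det_submatrix_eq_zero D fun t => by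
    simpa [det_submatrix_cons_eq_mul_det M hc, hc0] using h t
  refine ⟨Fin.cons (-∑ k, a k) a, fun h0 => ha ?_, ?_⟩
  · ext k
    simpa using congrFun h0 k.succ
  · ext j
    have hj := congrFun hD j
    simp only [vecMul, dotProduct, D, of_apply, mul_sub, Finset.sum_sub_distrib,
      Pi.zero_apply] at hj ⊢
    rw [Fin.sum_univ_succ, Fin.cons_zero, neg_mul, Finset.sum_mul]
    simp only [Fin.cons_succ]
    linear_combination hj

theorem eq_zero_of_vecMul_submatrix_eq_zero {ι n : Type*} [Fintype ι] [Fintype n]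
    [DecidableEq n] {U : Matrix n n F} (hU : IsUnit U) {w : ι → n} (hw : Function.Injective w)
    {a : ι → F} (h : a ᵥ* U.submatrix w id = 0) : a = 0 := by
  have hli := (linearIndependent_rows_of_isUnit hU).comp w hw
  ext k
  exact Fintype.linearIndependent_iff.mp hli a (by rwa [vecMul_eq_sum] at h) k

theorem exists_det_submatrix_cons_ne_zero {n : Type*} [Fintype n] [DecidableEq n] {m : ℕ}
    {U : Matrix n n F} (hU : IsUnit U) {j₀ : n} {c : F} (hc : ∀ v, U v j₀ = c) (hc0 : c ≠ 0)
    {w : Fin (m + 1) → n} (hw : Function.Injective w) :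
    ∃ t : Fin m → n, (U.submatrix w (Fin.cons j₀ t)).det ≠ 0 := by
  by_contra! h
  obtain ⟨a, ha, hA⟩ := exists_ne_zero_vecMul_eq_zero_of_det_submatrix_cons_eq_zero
    (U.submatrix w id) (fun i => hc (w i)) hc0 h
  exact ha (eq_zero_of_vecMul_submatrix_eq_zero hU hw hA)

theorem exists_det_submatrix_ne_zero_of_forall_ne {n : Type*} [Fintype n] [DecidableEq n]
    {m : ℕ} {U : Matrix n n F} (hU : U * Uᵀ = 1) {j₀ : n} (hc : ∀ v, U v j₀ ≠ 0)
    {w : Fin m → n} (hw : Function.Injective w) (hws : ¬ Function.Surjective w) :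
    ∃ t : Fin m → n, (∀ k, t k ≠ j₀) ∧ (U.submatrix w t).det ≠ 0 := by
  by_contra! h
  obtain ⟨a, ha, hA⟩ := exists_ne_zero_vecMul_eq_zero_of_det_submatrix_eq_zero
    (U.submatrix w (Subtype.val : {j // j ≠ j₀} → n)) fun t => h _ fun k => (t k).2
  -- `b = ∑ a k • e (w k)` has `b ᵥ* U = y`, so `b = y ᵥ* Uᵀ` is a multiple of column `j₀`;
  -- but `b` vanishes off the range of `w`
  let b : n → F := ∑ k, Pi.single (w k) (a k)
  have hby : b ᵥ* U = a ᵥ* U.submatrix w id := by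
    rw [sum_vecMul, vecMul_eq_sum]
    simp only [single_vecMul]
    rfl
  generalize hy : a ᵥ* U.submatrix w id = y at hby
  have hyj₀ : y = Pi.single j₀ (y j₀) := by
    ext j
    by_cases hj : j = j₀
    · simp [hj]
    · rw [Pi.single_eq_of_ne hj, ← hy]
      exact congrFun hA ⟨j, hj⟩
  obtain ⟨v₀, hv₀⟩ := not_forall.mp hws
  have hb : b = y ᵥ* Uᵀ := by rw [← hby, vecMul_vecMul, hU, vecMul_one]
  have hy0 : y j₀ = 0 := by
    have hbv := congrFun hb v₀
    rw [hyj₀, single_vecMul] at hbv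
    simpa [b, Finset.sum_apply, Pi.single_apply, fun k => Ne.symm (not_exists.mp hv₀ k), hc v₀]
      using hbv.symm
  have hU' : IsUnit U := (isUnit_iff_isUnit_det U).mpr (isUnit_det_of_right_inverse hU)
  exact ha (eq_zero_of_vecMul_submatrix_eq_zero hU' hw (by rw [hy, hyj₀, hy0, Pi.single_zero]))

theorem exists_mulVec_eq_smul_of_isRoot_charpoly {n : Type*} [Fintype n] [DecidableEq n]
    {M : Matrix n n F} {μ : F} (h : M.charpoly.IsRoot μ) : ∃ v ≠ 0, M *ᵥ v = μ • v := by
  obtain ⟨v, hv0, hv⟩ := exists_mulVec_eq_zero_iff.mpr (M.eval_charpoly μ ▸ h.eq_zero)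
  refine ⟨v, hv0, ?_⟩
  rw [sub_mulVec, sub_eq_zero] at hv
  rw [← hv]
  ext
  simp [mulVec_diagonal]

theorem exists_eq_smul_of_mulVec_eq_smul {n : Type*} [Fintype n] [DecidableEq n]
    {A U : Matrix n n F} (hA : A.IsSymm) (hU : Uᵀ * U = 1) {lam : n → F}
    (hlam : Function.Injective lam) (heig : ∀ j, A *ᵥ (fun v => U v j) = lam j • fun v => U v j)
    {i : n} {x : n → F} (hx : A *ᵥ x = lam i • x) : ∃ c : F, x = c • fun v => U v i := by
  have hcoord : ∀ j, j ≠ i → (Uᵀ *ᵥ x) j = 0 := by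
    intro j hj
    have h : lam j * (Uᵀ *ᵥ x) j = lam i * (Uᵀ *ᵥ x) j :=
      calc lam j * (Uᵀ *ᵥ x) j = (A *ᵥ fun v => U v j) ⬝ᵥ x := by
            rw [heig, smul_dotProduct]; rfl
        _ = (fun v => U v j) ⬝ᵥ (A *ᵥ x) := by
            rw [dotProduct_mulVec, ← vecMul_transpose, hA.eq]
        _ = lam i * (Uᵀ *ᵥ x) j := by rw [hx, dotProduct_smul]; rfl
    by_contra hx0
    exact hj (hlam (mul_right_cancel₀ hx0 h))
  refine ⟨(Uᵀ *ᵥ x) i, ?_⟩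
  have hx' : x = U *ᵥ Pi.single i ((Uᵀ *ᵥ x) i) := by
    conv_lhs => rw [← one_mulVec x, ← mul_eq_one_comm.mp hU, ← mulVec_mulVec]
    congr 1
    ext j
    by_cases hj : j = i
    · simp [hj]
    · simp [hj, hcoord j hj]
  nth_rewrite 1 [hx']
  ext v
  simp [mulVec_single, mul_comm]

end Matrix

theorem RingHom.exists_eq_smul_of_comp_eq_smul {K K' ι : Type*} [Field K] [Field K']
    (f : K →+* K') {z z' : ι → K} {r : ι → K'} {c c' : K'} (hz : f ∘ z = c • r)
    (hz' : f ∘ z' = c' • r) (h0 : z' ≠ 0) : ∃ d : K, z = d • z' := by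
  obtain ⟨x₀, hx₀⟩ := Function.ne_iff.mp h0
  have h := fun y => congrFun hz y
  have h' := fun y => congrFun hz' y
  simp only [Function.comp_apply, Pi.smul_apply, smul_eq_mul] at h h'
  obtain ⟨hc', hr⟩ : c' ≠ 0 ∧ r x₀ ≠ 0 := by
    rw [← mul_ne_zero_iff, ← h' x₀]
    exact (map_ne_zero f).mpr hx₀
  refine ⟨z x₀ / z' x₀, funext fun x => f.injective ?_⟩
  rw [Pi.smul_apply, smul_eq_mul, map_mul, map_div₀, h, h', h, h']
  field_simp

namespace SimpleGraph

variable {V : Type*} [Fintype V] [DecidableEq V] (G : SimpleGraph V) [DecidableRel G.Adj]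

theorem map_lapMatrix {R S : Type*} [Ring R] [Ring S] (f : R →+* S) :
    (G.lapMatrix R).map f = G.lapMatrix S := by
  ext i j
  simp [lapMatrix, degMatrix, adjMatrix, Matrix.diagonal, apply_ite f]

theorem comp_lapMatrix_mulVec {R S : Type*} [Ring R] [Ring S] (f : R →+* S) (z : V → R) :
    f ∘ (G.lapMatrix R *ᵥ z) = G.lapMatrix S *ᵥ (f ∘ z) := by
  ext v
  rw [Function.comp_apply, RingHom.map_mulVec, map_lapMatrix]

end SimpleGraph

section GaloisEigenbasis

variable {V : Type*} [Fintype V] [DecidableEq V] {G : SimpleGraph V} [DecidableRel G.Adj]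
  {L : Type*} [Field L] {ι : L →+* ℝ} {lamL : V → L} {lam : V → ℝ} {U : Matrix V V ℝ}

theorem SimpleGraph.exists_comp_eq_smul_of_lapMatrix_mulVec_eq_smul (hι : ∀ i, ι (lamL i) = lam i)
    (hlam : Function.Injective lam) (hU : Uᵀ * U = 1)
    (heig : ∀ i, G.lapMatrix ℝ *ᵥ (fun v => U v i) = lam i • fun v => U v i)
    {j : V} {z : V → L} (hz : G.lapMatrix L *ᵥ z = lamL j • z) :
    ∃ c : ℝ, ι ∘ z = c • fun v => U v j := by
  refine Matrix.exists_eq_smul_of_mulVec_eq_smul (G.isSymm_lapMatrix (R := ℝ)) hU hlam heig ?_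
  rw [← G.comp_lapMatrix_mulVec, hz, ← hι]
  ext v
  simp

theorem SimpleGraph.exists_eq_smul_of_lapMatrix_mulVec_eq_smul (hι : ∀ i, ι (lamL i) = lam i)
    (hlam : Function.Injective lam) (hU : Uᵀ * U = 1)
    (heig : ∀ i, G.lapMatrix ℝ *ᵥ (fun v => U v i) = lam i • fun v => U v i)
    {j : V} {z z' : V → L} (hz : G.lapMatrix L *ᵥ z = lamL j • z)
    (hz' : G.lapMatrix L *ᵥ z' = lamL j • z') (h0 : z' ≠ 0) : ∃ d : L, z = d • z' := by
  obtain ⟨c, hc⟩ := G.exists_comp_eq_smul_of_lapMatrix_mulVec_eq_smul hι hlam hU heig hz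
  obtain ⟨c', hc'⟩ := G.exists_comp_eq_smul_of_lapMatrix_mulVec_eq_smul hι hlam hU heig hz'
  exact ι.exists_eq_smul_of_comp_eq_smul hc hc' h0

theorem exists_galois_eigenbasis [Algebra ℚ L] (hι : ∀ i, ι (lamL i) = lam i)
    (hlam : Function.Injective lam) (hU : Uᵀ * U = 1)
    (heig : ∀ i, G.lapMatrix ℝ *ᵥ (fun v => U v i) = lam i • fun v => U v i)
    (hvec : ∀ i, ∃ z ≠ 0, G.lapMatrix L *ᵥ z = lamL i • z) :
    ∃ (W : Matrix V V L) (c : V → ℝ), (∀ j, c j ≠ 0) ∧ (∀ x j, ι (W x j) = U x j * c j) ∧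
      ∀ (σ : L ≃ₐ[ℚ] L) (i j : V), σ (lamL i) = lamL j →
        ∃ d ≠ 0, ∀ x, σ (W x i) = W x j * d := by
  choose z hz0 hz using hvec
  choose c hc using fun j =>
    G.exists_comp_eq_smul_of_lapMatrix_mulVec_eq_smul hι hlam hU heig (hz j)
  refine ⟨Matrix.of fun x j => z j x, c, fun j hcj => hz0 j ?_, fun x j => ?_, ?_⟩
  · ext x
    apply ι.injective
    simpa [hcj] using congrFun (hc j) x
  · simpa [mul_comm] using congrFun (hc j) x
  · intro σ i j hσ
    have hσz : G.lapMatrix L *ᵥ (σ ∘ z i) = lamL j • (σ ∘ z i) := by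
      rw [show (σ : L → L) = (σ : L →+* L) from rfl, ← G.comp_lapMatrix_mulVec, hz i, ← hσ]
      ext x
      simp
    have hσz0 : σ ∘ z i ≠ 0 := fun h0 => hz0 i (funext fun x => by simpa using congrFun h0 x)
    obtain ⟨d, hd⟩ :=
      G.exists_eq_smul_of_lapMatrix_mulVec_eq_smul hι hlam hU heig hσz (hz j) (hz0 j)
    refine ⟨d, fun hd0 => hσz0 (by simp [hd, hd0]), fun x => ?_⟩
    simpa [mul_comm] using congrFun hd x

end GaloisEigenbasis

theorem SimpleGraph.exists_lapMatrix_mulVec_eq_smul {n : ℕ} [NeZero n] (G : SimpleGraph (Fin n))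
    [DecidableRel G.Adj] {ξ : ℚ[X]} (hfac : (G.lapMatrix ℚ).charpoly = X * ξ) {L : Type*}
    [Field L] [Algebra ℚ L] {lamL : Fin n → L} (hroot : ∀ i, i ≠ 0 → aeval (lamL i) ξ = 0)
    (h0 : lamL 0 = 0) (i : Fin n) : ∃ z ≠ 0, G.lapMatrix L *ᵥ z = lamL i • z := by
  by_cases hi : i = 0
  · refine ⟨fun _ => 1, fun h => one_ne_zero (congrFun h 0), ?_⟩
    rw [hi, h0, zero_smul]
    exact G.lapMatrix_mulVec_const_eq_zero
  · apply Matrix.exists_mulVec_eq_smul_of_isRoot_charpoly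
    rw [← G.map_lapMatrix (algebraMap ℚ L), charpoly_map, IsRoot, eval_map_algebraMap, hfac,
      map_mul, hroot i hi, mul_zero]

theorem Function.Injective.exists_perm_of_image_univ_eq {α β : Type*} [Fintype α]
    [DecidableEq β] {f g : α → β} (hf : Function.Injective f) (hg : Function.Injective g)
    (h : Finset.univ.image f = Finset.univ.image g) : ∃ e : Equiv.Perm α, ∀ k, f k = g (e k) := by
  have hr : Set.range f = Set.range g := by
    simpa using congrArg ((↑) : Finset β → Set β) h
  refine ⟨(Equiv.ofInjective f hf).trans ((Equiv.setCongr hr).trans (Equiv.ofInjective g hg).symm),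
    fun k => ?_⟩
  simp [Equiv.apply_ofInjective_symm]

open Finset in
theorem exists_algEquiv_comp_eq_comp_perm {n m : ℕ} [NeZero n] {L : Type*} [Field L]
    [DecidableEq L] [Algebra ℚ L] {lamL : Fin n → L} (hinj : Function.Injective lamL)
    (h0 : lamL 0 = 0)
    (hhom : ∀ S S' : Finset (Fin n), 0 ∉ S → 0 ∉ S' → S.card = S'.card →
      ∃ g : L ≃ₐ[ℚ] L, (S.image lamL).image g = S'.image lamL)
    {s t : Fin m → Fin n} (hs : Function.Injective s) (ht : Function.Injective t)
    (hst : (∃ k, s k = 0) ↔ ∃ k, t k = 0) :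
    ∃ (σ : L ≃ₐ[ℚ] L) (e : Equiv.Perm (Fin m)), ∀ k, σ (lamL (s k)) = lamL (t (e k)) := by
  have hst' : 0 ∈ univ.image s ↔ 0 ∈ univ.image t := by simpa using hst
  obtain ⟨σ, hσ⟩ := hhom ((univ.image s).erase 0) ((univ.image t).erase 0) (notMem_erase _ _)
    (notMem_erase _ _) (by simp [card_erase_eq_ite, card_image_of_injective _ hs,
      card_image_of_injective _ ht, hst'])
  have himage : univ.image (σ ∘ lamL ∘ s) = univ.image (lamL ∘ t) := by
    rw [← image_image, ← image_image, ← image_image]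
    by_cases h : 0 ∈ univ.image s
    · rw [← insert_erase h, ← insert_erase (hst'.mp h), image_insert, image_insert, image_insert,
        hσ, h0, map_zero]
    · rwa [erase_eq_of_notMem h, erase_eq_of_notMem (mt hst'.mpr h)] at hσ
  obtain ⟨e, he⟩ := (σ.injective.comp (hinj.comp hs)).exists_perm_of_image_univ_eq
    (hinj.comp ht) himage
  exact ⟨σ, e, he⟩

theorem det_submatrix_eq_zero_iff_of_map {V L : Type*} [Fintype V] [DecidableEq V] [Field L]
    {ι : L →+* ℝ} {U : Matrix V V ℝ} {W : Matrix V V L} {c : V → ℝ} (hc : ∀ j, c j ≠ 0)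
    (hWU : ∀ x j, ι (W x j) = U x j * c j) {lamL : V → L} {R : Type*} [FunLike R L L]
    [RingHomClass R L L] {f : R}
    (hWf : ∀ i j, f (lamL i) = lamL j → ∃ d ≠ 0, ∀ x, f (W x i) = W x j * d) {m : ℕ}
    (w s t : Fin m → V) (e : Equiv.Perm (Fin m)) (hf : ∀ k, f (lamL (s k)) = lamL (t (e k))) :
    (U.submatrix w s).det = 0 ↔ (U.submatrix w t).det = 0 := by
  choose d hd0 hd using fun k => hWf _ _ (hf k)
  calc (U.submatrix w s).det = 0 ↔ (W.submatrix w s).det = 0 :=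
        (det_eq_zero_iff_of_map_eq_mul ι (fun k => hc (s k)) fun _ _ => hWU _ _).symm
    _ ↔ (W.submatrix w (t ∘ e)).det = 0 :=
        det_eq_zero_iff_of_map_eq_mul (f : L →+* L) hd0 fun i k => hd k (w i)
    _ ↔ (W.submatrix w t).det = 0 := by
        rw [show W.submatrix w (t ∘ e) = (W.submatrix w t).submatrix id e from rfl, det_permute']
        rcases Int.units_eq_one_or (Equiv.Perm.sign e) with h | h <;> simp [h]
    _ ↔ (U.submatrix w t).det = 0 :=
        det_eq_zero_iff_of_map_eq_mul ι (fun k => hc (t k)) fun _ _ => hWU _ _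

theorem stmt_13_general {n : ℕ} [NeZero n] (G : SimpleGraph (Fin n)) [DecidableRel G.Adj]
    (ξ : Polynomial ℚ)
    (hfac : (G.lapMatrix ℚ).charpoly = Polynomial.X * ξ)
    {L : Type*} [Field L] [DecidableEq L] [Algebra ℚ L]
    (lamL : Fin n → L) (ι : L →+* ℝ) (lam : Fin n → ℝ)
    (hι : ∀ i, ι (lamL i) = lam i)
    (hroot : ∀ i : Fin n, i ≠ 0 → Polynomial.aeval (lamL i) ξ = 0)
    (hdist : Function.Injective lam) (hlam0 : lam 0 = 0)
    (U : Matrix (Fin n) (Fin n) ℝ) (hU : U.transpose * U = 1)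
    (hU0 : ∀ v, U v 0 = 1 / Real.sqrt n)
    (heig : ∀ i, (G.lapMatrix ℝ).mulVec (fun v => U v i) = lam i • (fun v => U v i))
    (hhom : ∀ S S' : Finset (Fin n), 0 ∉ S → 0 ∉ S' → S.card = S'.card →
      ∃ g : L ≃ₐ[ℚ] L, (S.image lamL).image g = S'.image lamL) :
    ∀ (m : ℕ) (w s : Fin m → Fin n), Function.Injective w → Function.Injective s →
      (U.submatrix w s).det ≠ 0 := by
  intro m w s hw hs hdet
  have hlamL0 : lamL 0 = 0 := ι.injective (by rw [hι, hlam0, map_zero])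
  have hlamL : Function.Injective lamL := fun i j h => hdist (by rw [← hι, ← hι, h])
  obtain ⟨W, c, hc, hWU, hWσ⟩ := exists_galois_eigenbasis hι hdist hU heig
    (G.exists_lapMatrix_mulVec_eq_smul hfac hroot hlamL0)
  have hvanish : ∀ t : Fin m → Fin n, ((∃ k, s k = 0) ↔ ∃ k, t k = 0) →
      (U.submatrix w t).det = 0 := by
    intro t hst
    by_cases ht : Function.Injective t
    · obtain ⟨σ, e, hσ⟩ := exists_algEquiv_comp_eq_comp_perm hlamL hlamL0 hhom hs ht hst
      exact (det_submatrix_eq_zero_iff_of_map hc hWU (hWσ σ) w s t e hσ).mp hdet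
    · exact det_submatrix_eq_zero_of_not_injective U w ht
  have hsqrt : (1 : ℝ) / Real.sqrt n ≠ 0 :=
    one_div_ne_zero (Real.sqrt_ne_zero'.mpr (by exact_mod_cast NeZero.pos n))
  by_cases h0 : ∃ k, s k = 0
  · cases m with
    | zero => exact h0.elim fun k _ => k.elim0
    | succ m =>
      obtain ⟨t, ht⟩ := exists_det_submatrix_cons_ne_zero
        ((isUnit_iff_isUnit_det U).mpr (isUnit_det_of_left_inverse hU)) hU0 hsqrt hw
      exact ht (hvanish _ (iff_of_true h0 ⟨0, rfl⟩))
  · have hws : ¬ Function.Surjective w := fun hw' =>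
      (Fintype.card_lt_of_injective_not_surjective s hs fun hs' => h0 (hs' 0)).not_ge
        (Fintype.card_le_of_surjective w hw')
    obtain ⟨t, ht0, ht⟩ := exists_det_submatrix_ne_zero_of_forall_ne (mul_eq_one_comm.mp hU)
      (fun v => hU0 v ▸ hsqrt) hw hws
    exact ht (hvanish t (iff_of_false h0 (not_exists.mpr ht0)))

/-- For a connected graph `G` with Laplacian characteristic polynomial
`φ_L = X·ξ`, if the Galois group of `ξ` (acting on the `n-1` roots of `ξ`) is `m`-homogeneous
for every `m`, then all minors of every size of the orthonormal eigenvector matrix `U`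
(whose first column is the constant vector `1/√n`) are nonzero. -/
theorem stmt_13 {n : ℕ} [NeZero n] (G : SimpleGraph (Fin n)) [DecidableRel G.Adj]
    (hconn : G.Connected)
    (ξ : Polynomial ℚ)
    (hfac : (G.lapMatrix ℚ).charpoly = Polynomial.X * ξ)
    {L : Type*} [Field L] [DecidableEq L] [Algebra ℚ L]
    (lamL : Fin n → L) (ι : L →+* ℝ) (lam : Fin n → ℝ)
    (hι : ∀ i, ι (lamL i) = lam i)
    (hroot : ∀ i : Fin n, i ≠ 0 → Polynomial.aeval (lamL i) ξ = 0)
    (hdist : Function.Injective lam) (hlam0 : lam 0 = 0)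
    (U : Matrix (Fin n) (Fin n) ℝ) (hU : U.transpose * U = 1)
    (hU0 : ∀ v, U v 0 = 1 / Real.sqrt n)
    (heig : ∀ i, (G.lapMatrix ℝ).mulVec (fun v => U v i) = lam i • (fun v => U v i))
    (hhom : ∀ S S' : Finset (Fin n), 0 ∉ S → 0 ∉ S' → S.card = S'.card →
      ∃ g : L ≃ₐ[ℚ] L, (S.image lamL).image g = S'.image lamL) :
    ∀ (m : ℕ) (w s : Fin m → Fin n), Function.Injective w → Function.Injective s →
      (U.submatrix w s).det ≠ 0 :=
  stmt_13_general G ξ hfac lamL ι lam hι hroot hdist hlam0 U hU hU0 heig hhom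
end

section
/- Let A be the adjacency matrix of a graph G on n vertices with distinct eigenvalues λ_1,…,λ_n, orthonormal eigenvectors u_1,…,u_n, and suppose Gal(φ_A) ≥ A_n. Let v_1,…,v_k be vertices with radii r_1,…,r_k ≥ 1, Σ r_i = s, such that d(v_i, v_j) > r_i + r_j for all i ≠ j, and let S ⊆ [n] with |S| = s. Then the s×s generalized sampling matrix G(S, W, r_1,…,r_k), whose rows are (λ_{j}^{m} u_{j}(v_i))_{j∈S} for 0 ≤ m ≤ r_i − 1, is invertible. -/
/-!
Extend the rows of the sampling matrix to all `n` eigenvalues: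
`Z (i, m) = (λ_t ^ m * U (v_i) t)_t`. Then `⟨Z (i, m), Z (j, l)⟩ = (A ^ (m + l)) (v_i) (v_j)`,
which vanishes for `i ≠ j` since there is no walk of length `m + l < r_i + r_j`. Within one block
the rows are independent because `U` has no zero entry and the `λ_t` are distinct (Vandermonde),
so `Z` has full row rank and some square minor `det Z_T` is nonzero.

Writing the spectral projectors as Lagrange interpolation polynomials in `A`, `(det Z_T) ^ 2` is the
image under `ι` of an element of `L`, and an automorphism of `L` inducing the even permutation `σ`
of the eigenvalues maps it to the element for `σ ∘ T`. For `s ≥ 2` the alternating group maps any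
`s`-set of columns to any other up to reordering, so every minor is nonzero, the one at `S`
included. The same argument with `1 × 1` minors shows that `U` has no zero entry when `n ≥ 3`;
for `n ≤ 2` this is checked by hand.
-/

open Matrix Finset Polynomial

section Spectral

variable {m K : Type*} [Fintype m] [DecidableEq m] [CommRing K] {A U : Matrix m m K}
  {lam : m → K}

theorem Matrix.aeval_eq_mul_diagonal_mul_transpose (hU : Uᵀ * U = 1)
    (hA : A * U = U * diagonal lam) (p : K[X]) :
    aeval A p = U * diagonal (fun t => p.eval (lam t)) * Uᵀ := by
  have hU' : U * Uᵀ = 1 := mul_eq_one_comm.mp hU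
  let u : (Matrix m m K)ˣ := ⟨U, Uᵀ, hU', hU⟩
  let φ := (MulSemiringAction.toAlgEquiv K (Matrix m m K) (ConjAct.toConjAct u)).toAlgHom.comp
    (diagonalAlgHom K)
  have hφ (d : m → K) : φ d = U * diagonal d * Uᵀ := rfl
  have hAφ : A = φ lam := by rw [hφ, ← hA, Matrix.mul_assoc, hU', Matrix.mul_one]
  rw [hAφ, aeval_algHom_apply, hφ, aeval_pi_apply]
  simp only [coe_aeval_eq_eval]

theorem Matrix.aeval_apply_eq_sum (hU : Uᵀ * U = 1) (hA : A * U = U * diagonal lam) (p : K[X])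
    (a b : m) : aeval A p a b = ∑ t, p.eval (lam t) * (U a t * U b t) := by
  rw [aeval_eq_mul_diagonal_mul_transpose hU hA, mul_apply]
  simp only [mul_diagonal, transpose_apply]
  exact sum_congr rfl fun t _ => by ring

theorem Matrix.mul_eq_mul_diagonal_of_mulVec_eq
    (h : ∀ i, A *ᵥ (fun v => U v i) = lam i • fun v => U v i) : A * U = U * diagonal lam := by
  ext w i
  rw [mul_diagonal, mul_comm]
  simpa [mul_apply, dotProduct, mulVec] using congrFun (h i) w

end Spectral

theorem Matrix.map_aeval {m K K' : Type*} [Fintype m] [DecidableEq m] [CommRing K] [CommRing K']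
    (f : K →+* K') (A : Matrix m m K) (p : K[X]) :
    (aeval A p).map f = aeval (A.map f) (p.map f) :=
  map_aeval_eq_aeval_map (ψ := f.mapMatrix) (by ext; simp [algebraMap_matrix_apply, apply_ite f])
    p A

theorem Lagrange.map_basis {ι F K : Type*} [DecidableEq ι] [Field F] [Field K] (f : F →+* K)
    (s : Finset ι) (v : ι → F) (i : ι) :
    (Lagrange.basis s v i).map f = Lagrange.basis s (f ∘ v) i := by
  simp [Lagrange.basis, basisDivisor, Polynomial.map_prod]

theorem Lagrange.basis_univ_comp_perm {ι F : Type*} [Fintype ι] [DecidableEq ι] [Field F]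
    (v : ι → F) (σ : Equiv.Perm ι) (i : ι) :
    Lagrange.basis univ (v ∘ σ) i = Lagrange.basis univ v (σ i) :=
  prod_equiv σ (by simp) (by simp)

theorem SimpleGraph.map_adjMatrix {V α β : Type*} (G : SimpleGraph V) [DecidableRel G.Adj]
    [NonAssocSemiring α] [NonAssocSemiring β] (f : α →+* β) :
    (G.adjMatrix α).map f = G.adjMatrix β := by
  ext
  simp [adjMatrix_apply, apply_ite f]

theorem SimpleGraph.adjMatrix_pow_apply_eq_zero {V α : Type*} [Fintype V] [DecidableEq V]
    (G : SimpleGraph V) [DecidableRel G.Adj] [Semiring α] {k : ℕ} {u w : V}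
    (h : ∀ p : G.Walk u w, k < p.length) : (G.adjMatrix α ^ k) u w = 0 := by
  rw [adjMatrix_pow_apply_eq_card_walk, Fintype.card_eq_zero_iff.mpr ⟨fun p => (h p.1).ne' p.2⟩,
    Nat.cast_zero]

theorem Matrix.exists_injective_det_submatrix_ne_zero {R n K : Type*} [Fintype R] [DecidableEq R]
    [Fintype n] [Field K] {Y : Matrix R n K} (hY : LinearIndependent K Y.row) :
    ∃ T : R → n, Function.Injective T ∧ (Y.submatrix id T).det ≠ 0 := by
  obtain ⟨κ, c, hc, hspan, hli⟩ := exists_linearIndependent' K Y.col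
  have : Fintype κ := Fintype.ofInjective c hc
  have hcard : Fintype.card κ = Fintype.card R := by
    rw [← hY.rank_matrix, rank_eq_finrank_span_cols, ← hspan, finrank_span_eq_card hli]
  let e : R ≃ κ := (Fintype.equivOfCardEq hcard).symm
  refine ⟨c ∘ e, hc.comp e.injective, ?_⟩
  rw [← isUnit_iff_ne_zero, ← isUnit_iff_isUnit_det, ← linearIndependent_cols_iff_isUnit]
  exact hli.comp e e.injective

theorem linearIndependent_sigma_of_dotProduct_eq_zero {ι m K : Type*} {κ : ι → Type*}
    [Fintype ι] [∀ i, Fintype (κ i)] [Fintype m] [Field K] [LinearOrder K] [IsStrictOrderedRing K]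
    {f : (Σ i, κ i) → m → K} (horth : ∀ p q, p.1 ≠ q.1 → f p ⬝ᵥ f q = 0)
    (hblock : ∀ i, LinearIndependent K fun k => f ⟨i, k⟩) : LinearIndependent K f := by
  classical
  rw [Fintype.linearIndependent_iff]
  intro c hc ⟨i, k⟩
  let F (i : ι) : m → K := ∑ k, c ⟨i, k⟩ • f ⟨i, k⟩
  have hF : ∑ j, F j = 0 := by rw [← hc, Fintype.sum_sigma]
  have hFF (j : ι) (hij : i ≠ j) : F i ⬝ᵥ F j = 0 := by
    simp only [F, sum_dotProduct, dotProduct_sum, smul_dotProduct, dotProduct_smul,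
      horth ⟨i, _⟩ ⟨j, _⟩ hij, smul_zero, sum_const_zero]
  have hFi : F i ⬝ᵥ F i = 0 :=
    calc F i ⬝ᵥ F i = ∑ j, F i ⬝ᵥ F j :=
          (sum_eq_single i (fun j _ hji => hFF j hji.symm) (by simp)).symm
      _ = 0 := by rw [← dotProduct_sum, hF, dotProduct_zero]
  exact Fintype.linearIndependent_iff.mp (hblock i) _ (dotProduct_self_eq_zero.mp hFi) k

theorem linearIndependent_pow_mul {m K : Type*} [Fintype m] [Field K] {lam u : m → K}
    (hlam : Function.Injective lam) (hu : ∀ t, u t ≠ 0) {r : ℕ} (hr : r ≤ Fintype.card m) :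
    LinearIndependent K fun k : Fin r => fun t => lam t ^ (k : ℕ) * u t := by
  classical
  rw [Fintype.linearIndependent_iff]
  intro c hc
  let P : K[X] := ∑ k : Fin r, C (c k) * X ^ (k : ℕ)
  have hP : P = 0 := by
    refine eq_zero_of_degree_lt_of_eval_index_eq_zero (s := univ) hlam.injOn
      ((degree_sum_fin_lt c).trans_le (by simpa using hr)) fun t _ => ?_
    have := congrFun hc t
    simp only [Finset.sum_apply, Pi.smul_apply, smul_eq_mul, Pi.zero_apply] at this
    simp only [P, eval_finsetSum, eval_mul, eval_C, eval_pow, eval_X]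
    rw [← mul_left_inj' (hu t), zero_mul, ← this, sum_mul]
    exact sum_congr rfl fun k _ => by ring
  intro k
  simpa [P, finsetSum_coeff, coeff_C_mul_X_pow, Fin.val_inj] using congr_arg (coeff · k) hP

theorem Equiv.Perm.exists_mem_alternatingGroup_comp_eq_comp {R α : Type*} [Fintype R]
    [DecidableEq R] [Fintype α] [DecidableEq α] {T S : R → α} (hT : Function.Injective T)
    (hS : Function.Injective S) (hR : 2 ≤ Fintype.card R) :
    ∃ σ ∈ alternatingGroup α, ∃ π : Equiv.Perm R, σ ∘ T = S ∘ π := by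
  obtain ⟨σ, hσ⟩ := Equiv.Perm.exists_extending_pair T S hT hS
  have hσT : σ ∘ T = S := funext hσ
  rcases Int.units_eq_one_or (sign σ) with hsign | hsign
  · exact ⟨σ, hsign, 1, by rw [hσT]; rfl⟩
  · obtain ⟨x, y, hxy⟩ := Fintype.exists_pair_of_one_lt_card hR
    refine ⟨swap (S x) (S y) * σ, ?_, swap x y, ?_⟩
    · rw [mem_alternatingGroup, sign_mul, sign_swap (hS.ne hxy), hsign]
      rfl
    · rw [coe_mul, Function.comp_assoc, hσT, hS.swap_comp]

section Sampling

variable {m R K : Type*} [Fintype m] [DecidableEq m]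

/-- The paper's `G(S, W, r_1, …, r_k)` is the column submatrix at `S` for `R = Σ i, Fin (r i)`,
`a p = v p.1` and `e p = p.2`. -/
def samplingMatrix [CommRing K] (lam : m → K) (U : Matrix m m K) (a : R → m) (e : R → ℕ) :
    Matrix R m K :=
  of fun p t => lam t ^ e p * U (a p) t

theorem dotProduct_samplingMatrix_row [CommRing K] {A U : Matrix m m K} {lam : m → K}
    (hU : Uᵀ * U = 1) (hA : A * U = U * diagonal lam) (a : R → m) (e : R → ℕ) (p q : R) :
    (samplingMatrix lam U a e).row p ⬝ᵥ (samplingMatrix lam U a e).row q =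
      (A ^ (e p + e q)) (a p) (a q) := by
  rw [← aeval_X_pow (R := K), aeval_apply_eq_sum hU hA]
  simp only [samplingMatrix, row, dotProduct, of_apply, eval_pow, eval_X]
  exact sum_congr rfl fun t _ => by ring

variable [Fintype R]

/-- `aeval A (Lagrange.basis univ l t)` is the spectral projector of `A` onto its `l t`-eigenspace,
so this is the Gram matrix of the minor `T` of the sampling matrix (`eigenGram_eq_mul_transpose`),
written so that it makes sense over any field containing the eigenvalues, where a field
automorphism permuting them permutes the columns `T`. -/
noncomputable def eigenGram [Field K] (A : Matrix m m K) (l : m → K) (a : R → m) (e : R → ℕ)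
    (T : R → m) : Matrix R R K :=
  of fun p q => ∑ x, l (T x) ^ (e p + e q) * aeval A (Lagrange.basis univ l (T x)) (a p) (a q)

theorem eigenGram_map {K K' : Type*} [Field K] [Field K'] (f : K →+* K') (A : Matrix m m K)
    (l : m → K) (a : R → m) (e : R → ℕ) (T : R → m) :
    (eigenGram A l a e T).map f = eigenGram (A.map f) (f ∘ l) a e T := by
  ext p q
  simp only [eigenGram, map_apply, of_apply, map_sum, map_mul, map_pow, Function.comp_apply,
    ← Lagrange.map_basis, ← Matrix.map_aeval]

theorem eigenGram_comp_perm [Field K] (A : Matrix m m K) (l : m → K) (σ : Equiv.Perm m)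
    (a : R → m) (e : R → ℕ) (T : R → m) :
    eigenGram A (l ∘ σ) a e T = eigenGram A l a e (σ ∘ T) := by
  simp only [eigenGram, Lagrange.basis_univ_comp_perm, Function.comp_apply]

theorem eigenGram_eq_mul_transpose [Field K] {A U : Matrix m m K} {lam : m → K}
    (hlam : Function.Injective lam) (hU : Uᵀ * U = 1) (hA : A * U = U * diagonal lam)
    (a : R → m) (e : R → ℕ) (T : R → m) :
    eigenGram A lam a e T =
      (samplingMatrix lam U a e).submatrix id T * ((samplingMatrix lam U a e).submatrix id T)ᵀ := by
  ext p q
  have hproj (x : R) (b c : m) :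
      aeval A (Lagrange.basis univ lam (T x)) b c = U b (T x) * U c (T x) := by
    rw [aeval_apply_eq_sum hU hA, sum_eq_single (T x)]
    · rw [Lagrange.eval_basis_self hlam.injOn (mem_univ _), one_mul]
    · intro t _ ht
      rw [Lagrange.eval_basis_of_ne ht.symm (mem_univ _), zero_mul]
    · simp
  simp only [eigenGram, samplingMatrix, of_apply, mul_apply, submatrix_apply, transpose_apply,
    id, hproj, pow_add]
  exact sum_congr rfl fun x _ => by ring

variable [DecidableEq R]

theorem det_samplingMatrix_submatrix_comp_ne_zero {L : Type*} [Field K] [Field L]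
    {A U : Matrix m m K} {lam : m → K} (hlam : Function.Injective lam) (hU : Uᵀ * U = 1)
    (hA : A * U = U * diagonal lam) {AL : Matrix m m L} {lamL : m → L} (ι : L →+* K)
    (hAι : AL.map ι = A) (hι : ∀ i, ι (lamL i) = lam i) {g : L →+* L} {σ : Equiv.Perm m}
    (hAg : AL.map g = AL) (hg : ∀ i, g (lamL i) = lamL (σ i)) (a : R → m) (e : R → ℕ)
    {T : R → m} (hT : ((samplingMatrix lam U a e).submatrix id T).det ≠ 0) :
    ((samplingMatrix lam U a e).submatrix id (σ ∘ T)).det ≠ 0 := by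
  have hsq (T' : R → m) :
      ι (eigenGram AL lamL a e T').det = ((samplingMatrix lam U a e).submatrix id T').det ^ 2 := by
    rw [RingHom.map_det, RingHom.mapMatrix_apply, eigenGram_map, hAι, show ι ∘ lamL = lam from
      funext hι, eigenGram_eq_mul_transpose hlam hU hA, det_mul, det_transpose, sq]
  have hperm : g (eigenGram AL lamL a e T).det = (eigenGram AL lamL a e (σ ∘ T)).det := by
    rw [RingHom.map_det, RingHom.mapMatrix_apply, eigenGram_map, hAg,
      show g ∘ lamL = lamL ∘ σ from funext hg, eigenGram_comp_perm]
  have hne : (eigenGram AL lamL a e T).det ≠ 0 := fun h =>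
    hT ((pow_eq_zero_iff two_ne_zero).mp (by rw [← hsq, h, map_zero]))
  have hne' : (eigenGram AL lamL a e (σ ∘ T)).det ≠ 0 := hperm ▸ (map_ne_zero g).mpr hne
  exact fun h => (map_ne_zero ι).mpr hne' (by rw [hsq, h, zero_pow two_ne_zero])

theorem det_samplingMatrix_submatrix_ne_zero_of_alternatingGroup {L : Type*} [Field K] [Field L]
    {A U : Matrix m m K} {lam : m → K} (hlam : Function.Injective lam) (hU : Uᵀ * U = 1)
    (hA : A * U = U * diagonal lam) {AL : Matrix m m L} {lamL : m → L} (ι : L →+* K)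
    (hAι : AL.map ι = A) (hι : ∀ i, ι (lamL i) = lam i)
    (hGal : ∀ σ ∈ alternatingGroup m,
      ∃ g : L →+* L, AL.map g = AL ∧ ∀ i, g (lamL i) = lamL (σ i))
    (hR : 2 ≤ Fintype.card R) (a : R → m) (e : R → ℕ) {T S : R → m} (hT : Function.Injective T)
    (hS : Function.Injective S) (hdet : ((samplingMatrix lam U a e).submatrix id T).det ≠ 0) :
    ((samplingMatrix lam U a e).submatrix id S).det ≠ 0 := by
  obtain ⟨σ, hσ, π, hσπ⟩ := Equiv.Perm.exists_mem_alternatingGroup_comp_eq_comp hT hS hR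
  obtain ⟨g, hgA, hg⟩ := hGal σ hσ
  have h := det_samplingMatrix_submatrix_comp_ne_zero hlam hU hA ι hAι hι hgA hg a e hdet
  rw [hσπ] at h
  change (((samplingMatrix lam U a e).submatrix id S).submatrix id π).det ≠ 0 at h
  rw [det_permute'] at h
  exact right_ne_zero_of_mul h

end Sampling

theorem det_samplingMatrix_submatrix_ne_zero_of_card_le_one {m R K : Type*} [Fintype R]
    [DecidableEq R] [Field K] {lam : m → K} {U : Matrix m m K} (hU : ∀ b t, U b t ≠ 0)
    (hR : Fintype.card R ≤ 1) (a : R → m) {e : R → ℕ} (he : ∀ p, e p = 0) (T : R → m) :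
    ((samplingMatrix lam U a e).submatrix id T).det ≠ 0 := by
  rcases isEmpty_or_nonempty R with hR | ⟨⟨p⟩⟩
  · simp
  · have := Fintype.card_le_one_iff_subsingleton.mp hR
    rw [det_eq_elem_of_subsingleton _ p]
    simp [samplingMatrix, he, hU]

theorem Matrix.apply_ne_zero_of_alternatingGroup_of_three_le_card {m K L : Type*} [Fintype m]
    [DecidableEq m] [Field K] [Field L] {A U : Matrix m m K} {lam : m → K}
    (hlam : Function.Injective lam) (hU : Uᵀ * U = 1) (hA : A * U = U * diagonal lam)
    {AL : Matrix m m L} {lamL : m → L} (ι : L →+* K) (hAι : AL.map ι = A)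
    (hι : ∀ i, ι (lamL i) = lam i)
    (hGal : ∀ σ ∈ alternatingGroup m,
      ∃ g : L →+* L, AL.map g = AL ∧ ∀ i, g (lamL i) = lamL (σ i))
    (hm : 3 ≤ Fintype.card m) (a t : m) : U a t ≠ 0 := by
  obtain ⟨t₀, ht₀⟩ : ∃ t₀, U a t₀ ≠ 0 := by
    by_contra! h
    exact (isUnit_det_of_left_inverse hU).ne_zero (det_eq_zero_of_row_eq_zero a h)
  have := alternatingGroup.isPretransitive_of_three_le_card m (by rwa [Nat.card_eq_fintype_card])
  obtain ⟨⟨σ, hσ⟩, hσt⟩ := MulAction.exists_smul_eq (alternatingGroup m) t₀ t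
  obtain ⟨g, hgA, hg⟩ := hGal σ hσ
  have h := det_samplingMatrix_submatrix_comp_ne_zero hlam hU hA ι hAι hι hgA hg
    (fun _ : Unit => a) (fun _ => 0) (T := fun _ => t₀) (by simpa [samplingMatrix] using ht₀)
  simpa [samplingMatrix, ← hσt] using h

/-- With at most two vertices a zero entry forces `G` to have no edge, and then all eigenvalues
vanish. -/
theorem SimpleGraph.eigenbasis_apply_ne_zero_of_le_two {n : ℕ} (hn : n ≤ 2)
    (G : SimpleGraph (Fin n)) [DecidableRel G.Adj] {K : Type*} [Field K]
    {U : Matrix (Fin n) (Fin n) K} {lam : Fin n → K} (hlam : Function.Injective lam)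
    (hU : Uᵀ * U = 1) (hA : G.adjMatrix K * U = U * diagonal lam) (a t : Fin n) : U a t ≠ 0 := by
  intro hat
  have hcol (j : Fin n) : ∃ c, U c j ≠ 0 := by
    by_contra! h
    exact (isUnit_det_of_left_inverse hU).ne_zero (det_eq_zero_of_column_eq_zero j h)
  obtain ⟨b, hb⟩ := hcol t
  have hba : b ≠ a := fun h => hb (h ▸ hat)
  have hcover (c : Fin n) : c = a ∨ c = b := by
    have := c.2; have := a.2; have := b.2
    simp only [Fin.ext_iff, ne_eq] at hba ⊢
    omega
  have hab : ¬ G.Adj a b := by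
    have h := congrFun (congrFun hA a) t
    rw [mul_apply, mul_diagonal, hat, zero_mul, sum_eq_single b
      (fun c _ hcb => by rw [(hcover c).resolve_right hcb, hat, mul_zero]) (by simp),
      mul_eq_zero] at h
    simpa [hb] using h
  have hba' : ¬ G.Adj b a := fun h => hab h.symm
  have hG : G.adjMatrix K = 0 := by
    ext c d
    rcases hcover c with rfl | rfl <;> rcases hcover d with rfl | rfl <;> simp [hab, hba']
  have hlam0 (j : Fin n) : lam j = 0 := by
    obtain ⟨c, hc⟩ := hcol j
    have h := congrFun (congrFun hA c) j
    rw [hG, Matrix.zero_mul, mul_diagonal, Matrix.zero_apply, eq_comm, mul_eq_zero] at h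
    exact h.resolve_left hc
  exact hba (hlam (by rw [hlam0, hlam0]))

theorem SimpleGraph.eigenbasis_apply_ne_zero {n : ℕ} (G : SimpleGraph (Fin n)) [DecidableRel G.Adj]
    {K L : Type*} [Field K] [Field L] {U : Matrix (Fin n) (Fin n) K} {lam : Fin n → K}
    (hlam : Function.Injective lam) (hU : Uᵀ * U = 1) (hA : G.adjMatrix K * U = U * diagonal lam)
    {lamL : Fin n → L} (ι : L →+* K) (hι : ∀ i, ι (lamL i) = lam i)
    (hGal : ∀ σ ∈ alternatingGroup (Fin n),
      ∃ g : L →+* L, (G.adjMatrix L).map g = G.adjMatrix L ∧ ∀ i, g (lamL i) = lamL (σ i))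
    (a t : Fin n) : U a t ≠ 0 := by
  rcases le_or_gt n 2 with hn | hn
  · exact G.eigenbasis_apply_ne_zero_of_le_two hn hlam hU hA a t
  · exact apply_ne_zero_of_alternatingGroup_of_three_le_card hlam hU hA ι (G.map_adjMatrix ι) hι
      hGal (by simpa) a t

theorem SimpleGraph.linearIndependent_samplingMatrix_row {V K : Type*} [Fintype V] [DecidableEq V]
    (G : SimpleGraph V) [DecidableRel G.Adj] [Field K] [LinearOrder K] [IsStrictOrderedRing K]
    {U : Matrix V V K} {lam : V → K} (hlam : Function.Injective lam) (hU : Uᵀ * U = 1)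
    (hA : G.adjMatrix K * U = U * diagonal lam) (hU0 : ∀ a t, U a t ≠ 0) {k : ℕ} {v : Fin k → V}
    {r : Fin k → ℕ} (hr : ∀ i, r i ≤ Fintype.card V)
    (hdistance : ∀ i j, i ≠ j → ∀ p : G.Walk (v i) (v j), r i + r j < p.length) :
    LinearIndependent K
      (samplingMatrix lam U (fun p : Σ i, Fin (r i) => v p.1) (fun p => p.2)).row := by
  refine linearIndependent_sigma_of_dotProduct_eq_zero (fun p q hpq => ?_)
    (fun i => linearIndependent_pow_mul hlam (hU0 (v i)) (hr i))
  rw [dotProduct_samplingMatrix_row hU hA]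
  refine G.adjMatrix_pow_apply_eq_zero fun w => ?_
  have := hdistance _ _ hpq w
  omega

theorem stmt_16_general {n k s : ℕ} (G : SimpleGraph (Fin n)) [DecidableRel G.Adj]
    (lam : Fin n → ℝ) (U : Matrix (Fin n) (Fin n) ℝ)
    (hdist : Function.Injective lam) (hU : U.transpose * U = 1)
    (heig : ∀ i, (G.adjMatrix ℝ).mulVec (fun v => U v i) = lam i • (fun v => U v i))
    {L : Type*} [Field L] [Algebra ℚ L] (lamL : Fin n → L) (ι : L →+* ℝ)
    (hι : ∀ i, ι (lamL i) = lam i)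
    (hGal : ∀ σ : Equiv.Perm (Fin n), σ ∈ alternatingGroup (Fin n) →
      ∃ g : L ≃ₐ[ℚ] L, ∀ i, g (lamL i) = lamL (σ i))
    (v : Fin k → Fin n) (r : Fin k → ℕ) (hsum : ∑ i, r i = s)
    (hdistance : ∀ i j, i ≠ j → ∀ p : G.Walk (v i) (v j), r i + r j < p.length)
    (S : Fin s → Fin n) (hS : Function.Injective S) :
    (Matrix.of fun (p : Σ i : Fin k, Fin (r i)) (j : Fin s) =>
      lam (S j) ^ (p.2 : ℕ) * U (v p.1) (S j)).rank = s := by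
  classical
  have hA := mul_eq_mul_diagonal_of_mulVec_eq heig
  have hGal' (σ) (hσ : σ ∈ alternatingGroup (Fin n)) : ∃ g : L →+* L,
      (G.adjMatrix L).map g = G.adjMatrix L ∧ ∀ i, g (lamL i) = lamL (σ i) :=
    let ⟨g, hg⟩ := hGal σ hσ
    ⟨g, G.map_adjMatrix _, hg⟩
  have hU0 := G.eigenbasis_apply_ne_zero hdist hU hA ι hι hGal'
  have hrs (i : Fin k) : r i ≤ s := hsum ▸ single_le_sum (fun _ _ => Nat.zero_le _) (mem_univ i)
  have hsn : s ≤ Fintype.card (Fin n) := by simpa using Fintype.card_le_of_injective S hS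
  have hcard : Fintype.card (Σ i : Fin k, Fin (r i)) = s := by simp [hsum]
  let e := Fintype.equivFinOfCardEq hcard
  suffices hdet : ((samplingMatrix lam U (fun p : Σ i : Fin k, Fin (r i) => v p.1)
      (fun p => p.2)).submatrix id (S ∘ e)).det ≠ 0 by
    rw [← rank_submatrix _ (Equiv.refl _) e]
    exact (rank_of_isUnit _ ((isUnit_iff_isUnit_det _).mpr hdet.isUnit)).trans hcard
  rcases le_or_gt s 1 with hs | hs
  · exact det_samplingMatrix_submatrix_ne_zero_of_card_le_one hU0 (hcard.trans_le hs) _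
      (fun p => Nat.lt_one_iff.mp (p.2.2.trans_le ((hrs p.1).trans hs))) _
  obtain ⟨T₀, hT₀, hdet₀⟩ := exists_injective_det_submatrix_ne_zero
    (G.linearIndependent_samplingMatrix_row hdist hU hA hU0 (fun i => (hrs i).trans hsn) hdistance)
  exact det_samplingMatrix_submatrix_ne_zero_of_alternatingGroup hdist hU hA ι
    (G.map_adjMatrix ι) hι hGal' (hcard.symm ▸ hs) _ _ hT₀ (hS.comp e.injective) hdet₀

/-- For the adjacency matrix of a graph with distinct eigenvalues, orthonormal
eigenvectors and `Gal(φ_A) ≥ A_n`, the generalized sampling matrix `G(S, W, r_1, …, r_k)` built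
from vertices `v_i` with radii `r_i` satisfying `d(v_i, v_j) > r_i + r_j` has full rank `s`. -/
theorem stmt_16 {n k s : ℕ} (G : SimpleGraph (Fin n)) [DecidableRel G.Adj]
    (lam : Fin n → ℝ) (U : Matrix (Fin n) (Fin n) ℝ)
    (hdist : Function.Injective lam) (hU : U.transpose * U = 1)
    (heig : ∀ i, (G.adjMatrix ℝ).mulVec (fun v => U v i) = lam i • (fun v => U v i))
    {L : Type*} [Field L] [Algebra ℚ L] (lamL : Fin n → L) (ι : L →+* ℝ)
    (hι : ∀ i, ι (lamL i) = lam i)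
    (hroot : ∀ i, Polynomial.aeval (lamL i) ((G.adjMatrix ℚ).charpoly) = 0)
    (hGal : ∀ σ : Equiv.Perm (Fin n), σ ∈ alternatingGroup (Fin n) →
      ∃ g : L ≃ₐ[ℚ] L, ∀ i, g (lamL i) = lamL (σ i))
    (v : Fin k → Fin n) (r : Fin k → ℕ) (hr : ∀ i, 1 ≤ r i) (hsum : ∑ i, r i = s)
    (hdistance : ∀ i j, i ≠ j → ∀ p : G.Walk (v i) (v j), r i + r j < p.length)
    (S : Fin s → Fin n) (hS : Function.Injective S) :
    (Matrix.of fun (p : Σ i : Fin k, Fin (r i)) (j : Fin s) =>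
      lam (S j) ^ (p.2 : ℕ) * U (v p.1) (S j)).rank = s :=
  stmt_16_general G lam U hdist hU heig lamL ι hι hGal v r hsum hdistance S hS
end
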